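/- arXiv:2407.11565 — 8 statements merged into one kernel-verified Lean document; each statement's English description precedes it below -/
import Mathlib

section
/- Let {h_i}_{i∈𝓘_N} be a D-system on [0,1]. Then for every infinite sequence (i_n)_{n≥1} with values in 𝓘_N, lim_{n→∞} |h_{i_1}∘⋯∘h_{i_n}(1) − h_{i_1}∘⋯∘h_{i_n}(0)| = 0. -/
open Set Filter Topology

/-- A compatible system of `N` maps on `[0,1]`: each map is continuous and strictly
increasing on `[0,1]`, maps `[0,1]` into `[0,1]`, `h 0 0 = 0`, `h (i-1) 1 = h i 0`
for `1 ≤ i ≤ N-1`, and `h (N-1) 1 = 1`. -/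
def CompatibleSystem (N : ℕ) (h : ℕ → ℝ → ℝ) : Prop :=
  (∀ i < N, Set.MapsTo (h i) (Set.Icc (0:ℝ) 1) (Set.Icc (0:ℝ) 1)) ∧
  (∀ i < N, ContinuousOn (h i) (Set.Icc (0:ℝ) 1)) ∧
  (∀ i < N, StrictMonoOn (h i) (Set.Icc (0:ℝ) 1)) ∧
  h 0 0 = 0 ∧
  (∀ i, 1 ≤ i → i < N → h (i - 1) 1 = h i 0) ∧
  h (N - 1) 1 = 1

/-- `h_{σ₁} ∘ ⋯ ∘ h_{σₙ} (x)` for a finite word `σ`. -/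
def wordComp (h : ℕ → ℝ → ℝ) (σ : List ℕ) (x : ℝ) : ℝ :=
  σ.foldr (fun i y => h i y) x

/-- The set `𝓓_h = {h_{i₁} ∘ ⋯ ∘ h_{iₙ}(j) : n ≥ 1, i₁,…,iₙ < N, j ∈ {0,1}}`. -/
def DSet (N : ℕ) (h : ℕ → ℝ → ℝ) : Set ℝ :=
  {x | ∃ σ : List ℕ, σ ≠ [] ∧ (∀ i ∈ σ, i < N) ∧ ∃ j : ℝ, (j = 0 ∨ j = 1) ∧ x = wordComp h σ j}

/-- A D-system: a compatible system whose set `𝓓_h` is dense in `[0,1]`. -/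
def IsDSystem (N : ℕ) (h : ℕ → ℝ → ℝ) : Prop :=
  CompatibleSystem N h ∧ Set.Icc (0:ℝ) 1 ⊆ closure (DSet N h)

/-- `h_{i 0} ∘ h_{i 1} ∘ ⋯ ∘ h_{i (n-1)} (x)` for an infinite sequence `i`. -/
def seqComp (h : ℕ → ℝ → ℝ) (i : ℕ → ℕ) (n : ℕ) (x : ℝ) : ℝ :=
  wordComp h (List.ofFn fun k : Fin n => i k) x

section Aux

variable {N : ℕ} {h : ℕ → ℝ → ℝ}

lemma wordComp_nil (x : ℝ) : wordComp h [] x = x := rfl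

lemma wordComp_cons (s : ℕ) (σ : List ℕ) (x : ℝ) :
    wordComp h (s :: σ) x = h s (wordComp h σ x) := rfl

lemma wordComp_append (σ τ : List ℕ) (x : ℝ) :
    wordComp h (σ ++ τ) x = wordComp h σ (wordComp h τ x) := by
  simp [wordComp, List.foldr_append]

lemma wordComp_mapsTo (hc : CompatibleSystem N h) :
    ∀ σ : List ℕ, (∀ i ∈ σ, i < N) →
      Set.MapsTo (wordComp h σ) (Set.Icc (0:ℝ) 1) (Set.Icc (0:ℝ) 1) := by
  intro σ
  induction σ with
  | nil => intro _ x hx; simpa [wordComp_nil] using hx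
  | cons s σ ih =>
      intro hσ x hx
      rw [wordComp_cons]
      exact hc.1 s (hσ s (by simp)) (ih (fun i hi => hσ i (by simp [hi])) hx)

lemma wordComp_mono (hc : CompatibleSystem N h) :
    ∀ σ : List ℕ, (∀ i ∈ σ, i < N) →
      MonotoneOn (wordComp h σ) (Set.Icc (0:ℝ) 1) := by
  intro σ
  induction σ with
  | nil => intro _ x _ y _ hxy; simpa [wordComp_nil] using hxy
  | cons s σ ih =>
      intro hσ x hx y hy hxy
      rw [wordComp_cons, wordComp_cons]
      have hs : s < N := hσ s (by simp)
      have hσ' : ∀ i ∈ σ, i < N := fun i hi => hσ i (by simp [hi])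
      exact (hc.2.2.1 s hs).monotoneOn (wordComp_mapsTo hc σ hσ' hx)
        (wordComp_mapsTo hc σ hσ' hy) (ih hσ' hx hy hxy)

/-- The chain: if `p < q < N` then `h p 1 ≤ h q 0`. -/
lemma chain_le (hc : CompatibleSystem N h) :
    ∀ q, ∀ p, p < q → q < N → h p 1 ≤ h q 0 := by
  intro q
  induction q with
  | zero => intro p hp; omega
  | succ q ih =>
      intro p hp hqN
      have key : h q 1 = h (q + 1) 0 := by
        have := hc.2.2.2.2.1 (q + 1) (by omega) hqN
        simpa using this
      rcases Nat.lt_or_ge p q with hpq | hpq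
      · have h1 : h p 1 ≤ h q 0 := ih p hpq (by omega)
        have h2 : h q 0 ≤ h q 1 :=
          ((hc.2.2.1 q (by omega)).monotoneOn (by norm_num) (by norm_num) (by norm_num))
        linarith
      · have : p = q := by omega
        subst this
        exact key.le

/-- Two distinct words of the same length have (essentially) disjoint images. -/
lemma separation (hc : CompatibleSystem N h) :
    ∀ σ τ : List ℕ, σ.length = τ.length → (∀ i ∈ σ, i < N) → (∀ i ∈ τ, i < N) →
      σ ≠ τ →
      wordComp h σ 1 ≤ wordComp h τ 0 ∨ wordComp h τ 1 ≤ wordComp h σ 0 := by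
  intro σ
  induction σ with
  | nil =>
      intro τ hlen _ _ hne
      exact absurd (List.length_eq_zero_iff.mp hlen.symm).symm hne
  | cons s σ ih =>
      intro τ hlen hσ hτ hne
      rcases τ with _ | ⟨t, τ⟩
      · simp at hlen
      have hs : s < N := hσ s (by simp)
      have ht : t < N := hτ t (by simp)
      have hσ' : ∀ i ∈ σ, i < N := fun i hi => hσ i (by simp [hi])
      have hτ' : ∀ i ∈ τ, i < N := fun i hi => hτ i (by simp [hi])
      have hlen' : σ.length = τ.length := by simpa using hlen
      have hmemσ0 := wordComp_mapsTo hc σ hσ' (show (0:ℝ) ∈ Set.Icc (0:ℝ) 1 by norm_num)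
      have hmemσ1 := wordComp_mapsTo hc σ hσ' (show (1:ℝ) ∈ Set.Icc (0:ℝ) 1 by norm_num)
      have hmemτ0 := wordComp_mapsTo hc τ hτ' (show (0:ℝ) ∈ Set.Icc (0:ℝ) 1 by norm_num)
      have hmemτ1 := wordComp_mapsTo hc τ hτ' (show (1:ℝ) ∈ Set.Icc (0:ℝ) 1 by norm_num)
      rcases Nat.lt_trichotomy s t with hst | hst | hst
      · left
        rw [wordComp_cons, wordComp_cons]
        calc h s (wordComp h σ 1)
            ≤ h s 1 := (hc.2.2.1 s hs).monotoneOn hmemσ1 (by norm_num) hmemσ1.2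
          _ ≤ h t 0 := chain_le hc t s hst ht
          _ ≤ h t (wordComp h τ 0) :=
              (hc.2.2.1 t ht).monotoneOn (by norm_num) hmemτ0 hmemτ0.1
      · subst hst
        have hne' : σ ≠ τ := fun hh => hne (by rw [hh])
        rcases ih τ hlen' hσ' hτ' hne' with h1 | h1
        · left
          rw [wordComp_cons, wordComp_cons]
          exact (hc.2.2.1 s hs).monotoneOn hmemσ1 hmemτ0 h1
        · right
          rw [wordComp_cons, wordComp_cons]
          exact (hc.2.2.1 s hs).monotoneOn hmemτ1 hmemσ0 h1
      · right
        rw [wordComp_cons, wordComp_cons]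
        calc h t (wordComp h τ 1)
            ≤ h t 1 := (hc.2.2.1 t ht).monotoneOn hmemτ1 (by norm_num) hmemτ1.2
          _ ≤ h s 0 := chain_le hc s t hst hs
          _ ≤ h s (wordComp h σ 0) :=
              (hc.2.2.1 s hs).monotoneOn (by norm_num) hmemσ0 hmemσ0.1

end Aux

/-- for a D-system, along any infinite sequence the lengths of the
images of `[0,1]` tend to `0`. -/
theorem stmt0 (N : ℕ) (hN : 2 ≤ N) (h : ℕ → ℝ → ℝ) (hD : IsDSystem N h)
    (i : ℕ → ℕ) (hi : ∀ n, i n < N) :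
    Tendsto (fun n => |seqComp h i n 1 - seqComp h i n 0|) atTop (𝓝 0) := by
  obtain ⟨hc, hdense⟩ := hD
  set σ : ℕ → List ℕ := fun n => List.ofFn fun k : Fin n => i k with hσdef
  have hσN : ∀ n, ∀ j ∈ σ n, j < N := by
    intro n j hj
    rw [hσdef, List.mem_ofFn] at hj
    obtain ⟨k, rfl⟩ := hj
    exact hi k
  set a : ℕ → ℝ := fun n => seqComp h i n 0 with ha
  set b : ℕ → ℝ := fun n => seqComp h i n 1 with hb
  have haw : ∀ n, a n = wordComp h (σ n) 0 := fun n => rfl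
  have hbw : ∀ n, b n = wordComp h (σ n) 1 := fun n => rfl
  have hσsucc : ∀ n, σ (n + 1) = σ n ++ [i n] := by
    intro n
    show (List.ofFn fun k : Fin (n+1) => i k) = (List.ofFn fun k : Fin n => i k) ++ [i n]
    rw [List.ofFn_succ']
    simp [List.concat_eq_append]
  have hab : ∀ n, a n ≤ b n := by
    intro n
    rw [haw, hbw]
    exact wordComp_mono hc (σ n) (hσN n) (by norm_num) (by norm_num) (by norm_num)
  have hamem : ∀ n, a n ∈ Set.Icc (0:ℝ) 1 := fun n =>
    wordComp_mapsTo hc (σ n) (hσN n) (by norm_num)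
  have hbmem : ∀ n, b n ∈ Set.Icc (0:ℝ) 1 := fun n =>
    wordComp_mapsTo hc (σ n) (hσN n) (by norm_num)
  have himem : ∀ n, h (i n) 0 ∈ Set.Icc (0:ℝ) 1 := fun n => hc.1 (i n) (hi n) (by norm_num)
  have himem1 : ∀ n, h (i n) 1 ∈ Set.Icc (0:ℝ) 1 := fun n => hc.1 (i n) (hi n) (by norm_num)
  have hamono : Monotone a := by
    apply monotone_nat_of_le_succ
    intro n
    rw [haw, haw, hσsucc n, wordComp_append]
    have : wordComp h [i n] 0 = h (i n) 0 := rfl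
    rw [this]
    exact wordComp_mono hc (σ n) (hσN n) (by norm_num) (himem n) (himem n).1
  have hbanti : Antitone b := by
    apply antitone_nat_of_succ_le
    intro n
    rw [hbw, hbw, hσsucc n, wordComp_append]
    have : wordComp h [i n] 1 = h (i n) 1 := rfl
    rw [this]
    exact wordComp_mono hc (σ n) (hσN n) (himem1 n) (by norm_num) (himem1 n).2
  have habd : ∀ n m, a n ≤ b m := by
    intro n m
    calc a n ≤ a (max n m) := hamono (le_max_left n m)
      _ ≤ b (max n m) := hab _
      _ ≤ b m := hbanti (le_max_right n m)
  have hbddA : BddAbove (Set.range a) := ⟨1, by rintro x ⟨n, rfl⟩; exact (hamem n).2⟩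
  have hbddB : BddBelow (Set.range b) := ⟨0, by rintro x ⟨n, rfl⟩; exact (hbmem n).1⟩
  set A := ⨆ n, a n with hA
  set B := ⨅ n, b n with hB
  have haA : ∀ n, a n ≤ A := fun n => le_ciSup hbddA n
  have hbB : ∀ n, B ≤ b n := fun n => ciInf_le hbddB n
  have hAB : A ≤ B := ciSup_le fun n => le_ciInf fun m => habd n m
  have htA : Tendsto a atTop (𝓝 A) := tendsto_atTop_ciSup hamono hbddA
  have htB : Tendsto b atTop (𝓝 B) := tendsto_atTop_ciInf hbanti hbddB
  have hABeq : A = B := by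
    by_contra hne
    have hAltB : A < B := lt_of_le_of_ne hAB hne
    set c := (A + B) / 2 with hc'
    have hcA : A < c := by rw [hc']; linarith
    have hcB : c < B := by rw [hc']; linarith
    have hcmem : c ∈ Set.Icc (0:ℝ) 1 := by
      constructor
      · have := (hamem 0).1
        have := haA 0
        linarith
      · have := (hbmem 0).2
        have := hbB 0
        linarith
    have hccl := hdense hcmem
    rw [mem_closure_iff] at hccl
    obtain ⟨d, hdIoo, hdD⟩ := hccl (Set.Ioo A B) isOpen_Ioo ⟨hcA, hcB⟩
    obtain ⟨τ, hτne, hτN, j, hj01, rfl⟩ := hdD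
    set m := τ.length with hm
    have hσmlen : (σ m).length = m := by simp [hσdef]
    have hjmem : j ∈ Set.Icc (0:ℝ) 1 := by rcases hj01 with rfl | rfl <;> norm_num
    have hd0 : wordComp h τ 0 ≤ wordComp h τ j :=
      wordComp_mono hc τ hτN (by norm_num) hjmem hjmem.1
    have hd1 : wordComp h τ j ≤ wordComp h τ 1 :=
      wordComp_mono hc τ hτN hjmem (by norm_num) hjmem.2
    by_cases hcase : τ = σ m
    · rcases hj01 with rfl | rfl
      · have : wordComp h τ 0 = a m := by rw [hcase, haw]
        rw [this] at hdIoo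
        exact absurd hdIoo.1 (not_lt.mpr (haA m))
      · have : wordComp h τ 1 = b m := by rw [hcase, hbw]
        rw [this] at hdIoo
        exact absurd hdIoo.2 (not_lt.mpr (hbB m))
    · rcases separation hc τ (σ m) (by rw [hσmlen]) hτN (hσN m) hcase with h1 | h1
      · have : wordComp h τ j ≤ A := by
          calc wordComp h τ j ≤ wordComp h τ 1 := hd1
            _ ≤ wordComp h (σ m) 0 := h1
            _ = a m := (haw m).symm
            _ ≤ A := haA m
        exact absurd hdIoo.1 (not_lt.mpr this)
      · have : B ≤ wordComp h τ j := by
          calc B ≤ b m := hbB m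
            _ = wordComp h (σ m) 1 := hbw m
            _ ≤ wordComp h τ 0 := h1
            _ ≤ wordComp h τ j := hd0
        exact absurd hdIoo.2 (not_lt.mpr this)
  have htend : Tendsto (fun n => b n - a n) atTop (𝓝 0) := by
    have := htB.sub htA
    rw [hABeq, sub_self] at this
    exact this
  have heq : (fun n => |seqComp h i n 1 - seqComp h i n 0|) = fun n => b n - a n := by
    funext n
    exact abs_of_nonneg (sub_nonneg.mpr (hab n))
  rw [heq]
  exact htend
end

section
/- Let h:[0,1]→[0,1] be a weak contraction. Then lim_{n→∞} φ_h^n(t) = 0 for every t > 0 (where φ_h^n denotes the n-fold iterate of φ_h), and |h(x)−h(y)| ≤ φ_h(|x−y|) for all x,y ∈ [0,1]. -/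
open Set Filter Topology

/-- The modulus `ω_h(s) = sup{|h x − h y| : x, y ∈ [0,1], |x−y| ≤ s}`. -/
noncomputable def omegaMod (h : ℝ → ℝ) (s : ℝ) : ℝ :=
  sSup {d | ∃ x ∈ Set.Icc (0:ℝ) 1, ∃ y ∈ Set.Icc (0:ℝ) 1, |x - y| ≤ s ∧ d = |h x - h y|}

/-- `φ_h(t) = lim_{s → t+0} ω_h(s)`; since `ω_h` is monotone this right limit equals
the infimum of `ω_h` over `(t, ∞)`. -/
noncomputable def phiMod (h : ℝ → ℝ) (t : ℝ) : ℝ :=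
  sInf (omegaMod h '' Set.Ioi t)

/-- `h : [0,1] → [0,1]` is a weak contraction if `φ_h(t) < t` for every `t > 0`. -/
def IsWeakContraction (h : ℝ → ℝ) : Prop :=
  Set.MapsTo h (Set.Icc (0:ℝ) 1) (Set.Icc (0:ℝ) 1) ∧ ∀ t > 0, phiMod h t < t

lemma my_omegaSet_bdd {h : ℝ → ℝ} (hm : Set.MapsTo h (Set.Icc (0:ℝ) 1) (Set.Icc (0:ℝ) 1))
    (s : ℝ) :
    BddAbove {d | ∃ x ∈ Set.Icc (0:ℝ) 1, ∃ y ∈ Set.Icc (0:ℝ) 1, |x - y| ≤ s ∧ d = |h x - h y|} := by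
  refine ⟨1, ?_⟩
  rintro d ⟨x, hx, y, hy, -, rfl⟩
  have h1 := hm hx; have h2 := hm hy
  rw [abs_sub_le_iff]
  constructor <;> [linarith [h1.2, h2.1]; linarith [h2.2, h1.1]]

lemma my_omega_nonneg (h : ℝ → ℝ) (s : ℝ) : 0 ≤ omegaMod h s :=
  Real.sSup_nonneg (by rintro d ⟨x, hx, y, hy, -, rfl⟩; positivity)

lemma my_bddBelow_phi_set (h : ℝ → ℝ) (t : ℝ) : BddBelow (omegaMod h '' Set.Ioi t) :=
  ⟨0, by rintro b ⟨s, hs, rfl⟩; exact my_omega_nonneg h s⟩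

lemma my_phi_nonneg (h : ℝ → ℝ) (t : ℝ) : 0 ≤ phiMod h t :=
  Real.sInf_nonneg (by rintro b ⟨s, hs, rfl⟩; exact my_omega_nonneg h s)

lemma my_phi_le_omega (h : ℝ → ℝ) {t s : ℝ} (hts : t < s) : phiMod h t ≤ omegaMod h s :=
  csInf_le (my_bddBelow_phi_set h t) ⟨s, hts, rfl⟩

lemma my_phi_mono (h : ℝ → ℝ) {t t' : ℝ} (htt : t ≤ t') : phiMod h t ≤ phiMod h t' :=
  csInf_le_csInf (my_bddBelow_phi_set h t) (nonempty_Ioi.image _)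
    (Set.image_mono (Set.Ioi_subset_Ioi htt))

lemma my_abs_le_phi {h : ℝ → ℝ} (hm : Set.MapsTo h (Set.Icc (0:ℝ) 1) (Set.Icc (0:ℝ) 1))
    {x y : ℝ} (hx : x ∈ Set.Icc (0:ℝ) 1) (hy : y ∈ Set.Icc (0:ℝ) 1) :
    |h x - h y| ≤ phiMod h |x - y| := by
  apply le_csInf (nonempty_Ioi.image _)
  rintro b ⟨s, hs, rfl⟩
  exact le_csSup (my_omegaSet_bdd hm s) ⟨x, hx, y, hy, (le_of_lt hs), rfl⟩

/-- for a weak contraction `h`, the iterates `φ_h^[n] t` tend to `0`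
for every `t > 0`, and `|h x − h y| ≤ φ_h(|x−y|)` on `[0,1]`. -/
theorem stmt4 (h : ℝ → ℝ) (hw : IsWeakContraction h) :
    (∀ t > (0:ℝ), Tendsto (fun n => (phiMod h)^[n] t) atTop (𝓝 0)) ∧
    ∀ x ∈ Set.Icc (0:ℝ) 1, ∀ y ∈ Set.Icc (0:ℝ) 1, |h x - h y| ≤ phiMod h |x - y| := by
  obtain ⟨hm, hc⟩ := hw
  have hphi0 : phiMod h 0 = 0 := by
    refine le_antisymm ?_ (my_phi_nonneg h 0)
    by_contra hp
    push_neg at hp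
    exact absurd ((my_phi_mono h hp.le).trans_lt (hc _ hp)) (lt_irrefl _)
  constructor
  · intro t ht
    set a : ℕ → ℝ := fun n => (phiMod h)^[n] t with ha
    have hstep : ∀ n, a (n + 1) = phiMod h (a n) := fun n =>
      Function.iterate_succ_apply' (phiMod h) n t
    have ha0 : ∀ n, 0 ≤ a n := by
      intro n
      induction n with
      | zero => exact ht.le
      | succ n ih => rw [hstep]; exact my_phi_nonneg h _
    have hdec : ∀ n, a (n + 1) ≤ a n := by
      intro n
      rw [hstep]
      rcases lt_or_eq_of_le (ha0 n) with h0 | h0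
      · exact (hc _ h0).le
      · rw [← h0, hphi0]
    have hant : Antitone a := antitone_nat_of_succ_le hdec
    have hbdd : BddBelow (Set.range a) := ⟨0, by rintro _ ⟨n, rfl⟩; exact ha0 n⟩
    have htend : Tendsto a atTop (𝓝 (⨅ n, a n)) := tendsto_atTop_ciInf hant hbdd
    set L := ⨅ n, a n with hL
    have hL0 : 0 ≤ L := le_ciInf ha0
    have hLle : ∀ n, L ≤ a n := fun n => ciInf_le hbdd n
    have hLphi : L ≤ phiMod h L := by
      apply le_csInf (nonempty_Ioi.image _)
      rintro b ⟨s, hs, rfl⟩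
      obtain ⟨n, hn⟩ := ((tendsto_order.1 htend).2 s hs).exists
      calc L ≤ a (n + 1) := hLle (n + 1)
        _ = phiMod h (a n) := hstep n
        _ ≤ omegaMod h s := my_phi_le_omega h hn
    rcases eq_or_lt_of_le hL0 with h0 | h0
    · rw [← h0] at htend; exact htend
    · exact absurd (hLphi.trans_lt (hc _ h0)) (lt_irrefl _)
  · intro x hx y hy
    exact my_abs_le_phi hm hx hy
end

section
/- Let {h_i}_{i∈𝓘_N} be a compatible system on [0,1] such that each h_i is a weak contraction on [0,1]. Then {h_i}_{i∈𝓘_N} is a D-system, i.e., the set 𝓓_h := {h_{i_1}∘⋯∘h_{i_n}(j) : n ≥ 1, i_1,…,i_n ∈ 𝓘_N, j ∈ {0,1}} is dense in [0,1]. -/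
open Set Filter Topology

section Aux


variable {g : ℝ → ℝ}

lemma omegaSet_bddAbove (hg : Set.MapsTo g (Set.Icc 0 1) (Set.Icc 0 1)) (s : ℝ) :
    BddAbove {d | ∃ x ∈ Set.Icc (0:ℝ) 1, ∃ y ∈ Set.Icc (0:ℝ) 1, |x - y| ≤ s ∧ d = |g x - g y|} := by
  refine ⟨1, ?_⟩
  rintro d ⟨x, hx, y, hy, -, rfl⟩
  have h1 := hg hx; have h2 := hg hy
  simp only [Set.mem_Icc] at h1 h2
  rw [abs_sub_le_iff]
  constructor <;> linarith

lemma zero_mem_omegaSet (g : ℝ → ℝ) {s : ℝ} (hs : 0 ≤ s) :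
    (0:ℝ) ∈ {d | ∃ x ∈ Set.Icc (0:ℝ) 1, ∃ y ∈ Set.Icc (0:ℝ) 1, |x - y| ≤ s ∧ d = |g x - g y|} :=
  ⟨0, by simp, 0, by simp, by simpa, by simp⟩

lemma abs_le_omega (hg : Set.MapsTo g (Set.Icc 0 1) (Set.Icc 0 1)) {x y s : ℝ}
    (hx : x ∈ Set.Icc (0:ℝ) 1) (hy : y ∈ Set.Icc (0:ℝ) 1) (hxy : |x - y| ≤ s) :
    |g x - g y| ≤ omegaMod g s :=
  le_csSup (omegaSet_bddAbove hg s) ⟨x, hx, y, hy, hxy, rfl⟩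

lemma omega_nonneg (hg : Set.MapsTo g (Set.Icc 0 1) (Set.Icc 0 1)) {s : ℝ} (hs : 0 ≤ s) :
    0 ≤ omegaMod g s :=
  le_csSup (omegaSet_bddAbove hg s) (zero_mem_omegaSet g hs)

lemma omega_mono (hg : Set.MapsTo g (Set.Icc 0 1) (Set.Icc 0 1)) {s t : ℝ}
    (hs : 0 ≤ s) (hst : s ≤ t) : omegaMod g s ≤ omegaMod g t := by
  apply csSup_le_csSup (omegaSet_bddAbove hg t) ⟨0, zero_mem_omegaSet g hs⟩
  rintro d ⟨x, hx, y, hy, hxy, rfl⟩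
  exact ⟨x, hx, y, hy, hxy.trans hst, rfl⟩

lemma omega_le_phi (hg : Set.MapsTo g (Set.Icc 0 1) (Set.Icc 0 1)) {t : ℝ} (ht : 0 ≤ t) :
    omegaMod g t ≤ phiMod g t := by
  apply le_csInf (Set.nonempty_Ioi.image _)
  rintro b ⟨s, hs, rfl⟩
  exact omega_mono hg ht (le_of_lt hs)

lemma phi_nonneg (hg : Set.MapsTo g (Set.Icc 0 1) (Set.Icc 0 1)) {t : ℝ} (ht : 0 ≤ t) :
    0 ≤ phiMod g t := by
  apply le_csInf (Set.nonempty_Ioi.image _)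
  rintro b ⟨s, hs, rfl⟩
  exact omega_nonneg hg (ht.trans (le_of_lt hs))

lemma phi_bddBelow (hg : Set.MapsTo g (Set.Icc 0 1) (Set.Icc 0 1)) {t : ℝ} (ht : 0 ≤ t) :
    BddBelow (omegaMod g '' Set.Ioi t) := by
  refine ⟨0, ?_⟩
  rintro b ⟨s, hs, rfl⟩
  exact omega_nonneg hg (ht.trans (le_of_lt hs))

lemma phi_mono (hg : Set.MapsTo g (Set.Icc 0 1) (Set.Icc 0 1)) {s t : ℝ}
    (hs : 0 ≤ s) (hst : s ≤ t) : phiMod g s ≤ phiMod g t := by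
  apply csInf_le_csInf (phi_bddBelow hg hs) (Set.nonempty_Ioi.image _)
  exact Set.image_mono (Set.Ioi_subset_Ioi hst)

lemma phi_zero_nonpos (hg : Set.MapsTo g (Set.Icc 0 1) (Set.Icc 0 1))
    (hφ : ∀ t > 0, phiMod g t < t) : phiMod g 0 ≤ 0 := by
  by_contra hc
  push_neg at hc
  have h1 : phiMod g 0 ≤ phiMod g (phiMod g 0) := phi_mono hg le_rfl hc.le
  have h2 := hφ _ hc
  linarith

end Aux

noncomputable def PhiMax (N : ℕ) (h : ℕ → ℝ → ℝ) (t : ℝ) : ℝ :=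
  if hN : N = 0 then 0
  else (Finset.range N).sup' (Finset.nonempty_range_iff.mpr hN) (fun i => phiMod (h i) t)

section PhiSec

variable {N : ℕ} {h : ℕ → ℝ → ℝ}

lemma PhiMax_eq (hN : N ≠ 0) (t : ℝ) :
    PhiMax N h t = (Finset.range N).sup' (Finset.nonempty_range_iff.mpr hN)
      (fun i => phiMod (h i) t) := dif_neg hN

lemma phi_le_PhiMax (hN : N ≠ 0) {i : ℕ} (hi : i < N) (t : ℝ) :
    phiMod (h i) t ≤ PhiMax N h t := by
  rw [PhiMax_eq hN]
  exact Finset.le_sup' (fun i => phiMod (h i) t) (Finset.mem_range.mpr hi)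

variable (hN : 2 ≤ N)
  (hmaps : ∀ i < N, Set.MapsTo (h i) (Set.Icc (0:ℝ) 1) (Set.Icc (0:ℝ) 1))
  (hφ : ∀ i < N, ∀ t > 0, phiMod (h i) t < t)

include hN hmaps

lemma PhiMax_nonneg {t : ℝ} (ht : 0 ≤ t) : 0 ≤ PhiMax N h t :=
  le_trans (phi_nonneg (hmaps 0 (by omega)) ht) (phi_le_PhiMax (by omega) (by omega) t)

include hφ

lemma PhiMax_le_self {t : ℝ} (ht : 0 ≤ t) : PhiMax N h t ≤ t := by
  rw [PhiMax_eq (by omega : N ≠ 0)]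
  apply Finset.sup'_le
  intro i hi
  rw [Finset.mem_range] at hi
  rcases ht.lt_or_eq with h0 | h0
  · exact (hφ i hi t h0).le
  · rw [← h0]; exact le_trans (phi_mono (hmaps i hi) le_rfl le_rfl)
      (phi_zero_nonpos (hmaps i hi) (hφ i hi))

omit hφ in
lemma iter_nonneg : ∀ n, 0 ≤ (PhiMax N h)^[n] 1 := by
  intro n
  induction n with
  | zero => simp
  | succ n ih =>
    rw [Function.iterate_succ_apply']
    exact PhiMax_nonneg hN hmaps ih

lemma iter_anti (n : ℕ) : (PhiMax N h)^[n+1] 1 ≤ (PhiMax N h)^[n] 1 := by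
  rw [Function.iterate_succ_apply']
  exact PhiMax_le_self hN hmaps hφ (iter_nonneg hN hmaps n)

lemma exists_iter_lt {ε : ℝ} (hε : 0 < ε) : ∃ n, (PhiMax N h)^[n] 1 < ε := by
  by_contra hc
  push_neg at hc
  set a : ℕ → ℝ := fun n => (PhiMax N h)^[n] 1 with ha
  set L : ℝ := sInf (Set.range a) with hLdef
  have hbdd : BddBelow (Set.range a) := ⟨0, by rintro x ⟨m, rfl⟩; exact iter_nonneg hN hmaps m⟩
  have hεL : ε ≤ L := le_csInf ⟨a 0, Set.mem_range_self 0⟩ (by rintro x ⟨m, rfl⟩; exact hc m)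
  have hL0 : 0 < L := lt_of_lt_of_le hε hεL
  have key : ∀ i : ℕ, ∃ s : ℝ, L < s ∧ (i < N → omegaMod (h i) s < L) := by
    intro i
    by_cases hi : i < N
    · have h1 : phiMod (h i) L < L := hφ i hi L hL0
      obtain ⟨b, ⟨s, hs, rfl⟩, hbL⟩ :=
        exists_lt_of_csInf_lt (Set.nonempty_Ioi.image _) h1
      exact ⟨s, hs, fun _ => hbL⟩
    · exact ⟨L + 1, lt_add_one L, fun h' => absurd h' hi⟩
  choose f hf1 hf2 using key
  set s : ℝ := (Finset.range N).inf' (Finset.nonempty_range_iff.mpr (by omega)) f with hsdef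
  have hLs : L < s := by
    rw [hsdef, Finset.lt_inf'_iff]
    intro i _
    exact hf1 i
  obtain ⟨x, ⟨n, rfl⟩, hxs⟩ := exists_lt_of_csInf_lt ⟨a 0, Set.mem_range_self 0⟩
    (show sInf (Set.range a) < s from lt_of_le_of_lt (le_refl L) hLs)
  have h1 : L ≤ a (n+1) := csInf_le hbdd ⟨n+1, rfl⟩
  have h2 : a (n+1) < L := by
    have : a (n+1) = PhiMax N h (a n) := Function.iterate_succ_apply' _ _ _
    rw [this, PhiMax_eq (by omega : N ≠ 0), Finset.sup'_lt_iff]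
    intro i hi
    rw [Finset.mem_range] at hi
    have han : 0 ≤ a n := iter_nonneg hN hmaps n
    have hfis : s ≤ f i := Finset.inf'_le f (Finset.mem_range.mpr hi)
    calc phiMod (h i) (a n) ≤ omegaMod (h i) (f i) :=
          csInf_le (phi_bddBelow (hmaps i hi) han) ⟨f i, lt_of_lt_of_le hxs hfis, rfl⟩
      _ < L := hf2 i hi
  linarith


omit hφ in
lemma word_bounds (hmono : ∀ i < N, StrictMonoOn (h i) (Set.Icc (0:ℝ) 1)) :
    ∀ σ : List ℕ, (∀ i ∈ σ, i < N) →
    wordComp h σ 0 ∈ Set.Icc (0:ℝ) 1 ∧ wordComp h σ 1 ∈ Set.Icc (0:ℝ) 1 ∧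
    wordComp h σ 0 ≤ wordComp h σ 1 ∧
    wordComp h σ 1 - wordComp h σ 0 ≤ (PhiMax N h)^[σ.length] 1 := by
  intro σ
  induction σ with
  | nil => intro _; simp [wordComp]
  | cons i σ ih =>
    intro hσ
    have hi : i < N := hσ i (List.mem_cons_self (a := i) (l := σ))
    obtain ⟨ha, hb, hab, hlen⟩ := ih (fun j hj => hσ j (List.mem_cons_of_mem i hj))
    set a := wordComp h σ 0
    set b := wordComp h σ 1
    have hwa : wordComp h (i :: σ) 0 = h i a := rfl
    have hwb : wordComp h (i :: σ) 1 = h i b := rfl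
    have hmem_a : h i a ∈ Set.Icc (0:ℝ) 1 := hmaps i hi ha
    have hmem_b : h i b ∈ Set.Icc (0:ℝ) 1 := hmaps i hi hb
    have hmono' : h i a ≤ h i b := (hmono i hi).monotoneOn ha hb hab
    refine ⟨by rw [hwa]; exact hmem_a, by rw [hwb]; exact hmem_b, by rw [hwa, hwb]; exact hmono', ?_⟩
    rw [hwa, hwb]
    set t : ℝ := (PhiMax N h)^[σ.length] 1 with htdef
    have ht0 : 0 ≤ t := iter_nonneg hN hmaps σ.length
    have h1 : |h i b - h i a| ≤ omegaMod (h i) t :=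
      abs_le_omega (hmaps i hi) hb ha (by rw [abs_of_nonneg (by linarith)]; exact hlen)
    have h2 : omegaMod (h i) t ≤ phiMod (h i) t := omega_le_phi (hmaps i hi) ht0
    have h3 : phiMod (h i) t ≤ PhiMax N h t := phi_le_PhiMax (by omega) hi t
    have h4 : (PhiMax N h)^[(i :: σ).length] 1 = PhiMax N h t := by
      rw [List.length_cons, Function.iterate_succ_apply']
    rw [h4]
    calc h i b - h i a ≤ |h i b - h i a| := le_abs_self _
      _ ≤ _ := h1.trans (h2.trans h3)

omit hmaps hφ in
lemma cover (hcomp : CompatibleSystem N h) :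
    ∀ n : ℕ, ∀ x ∈ Set.Icc (0:ℝ) 1, ∃ σ : List ℕ, σ.length = n ∧ (∀ i ∈ σ, i < N) ∧
      wordComp h σ 0 ≤ x ∧ x ≤ wordComp h σ 1 := by
  intro n
  induction n with
  | zero => intro x hx; exact ⟨[], rfl, by simp, hx.1, hx.2⟩
  | succ n ih =>
    intro x hx
    obtain ⟨hmaps', hcont', hmono', h00, hchain, hN1⟩ := hcomp
    set P : ℕ → Prop := fun k => h k 0 ≤ x with hP
    have hP0 : P 0 := by rw [hP]; simp only; rw [h00]; exact hx.1
    set k : ℕ := Nat.findGreatest P (N - 1) with hk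
    have hPk : P k := Nat.findGreatest_spec (Nat.zero_le _) hP0
    have hkle : k ≤ N - 1 := Nat.findGreatest_le _
    have hkN : k < N := by omega
    have hx1 : x ≤ h k 1 := by
      by_contra hcon
      push_neg at hcon
      rcases eq_or_lt_of_le hkle with heq | hlt
      · rw [heq] at hcon
        rw [hN1] at hcon
        exact absurd hx.2 (not_le.mpr hcon)
      · have hPk1 : P (k + 1) := by
          rw [hP]; simp only
          have := hchain (k + 1) (by omega) (by omega)
          simp only [Nat.add_sub_cancel] at this
          rw [← this]
          exact hcon.le
        have := Nat.le_findGreatest (by omega : k + 1 ≤ N - 1) hPk1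
        omega
    obtain ⟨y, hy, hyx⟩ := intermediate_value_Icc zero_le_one (hcont' k hkN) ⟨hPk, hx1⟩
    obtain ⟨σ, hlen, hσN, hl, hr⟩ := ih y hy
    obtain ⟨ha, hb, -, -⟩ := word_bounds hN hmaps' hmono' σ hσN
    refine ⟨k :: σ, by simp [hlen], ?_, ?_, ?_⟩
    · intro i hi
      rcases List.mem_cons.mp hi with rfl | hi
      · exact hkN
      · exact hσN i hi
    · show h k (wordComp h σ 0) ≤ x
      rw [← hyx]
      exact (hmono' k hkN).monotoneOn ha hy hl
    · show x ≤ h k (wordComp h σ 1)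
      rw [← hyx]
      exact (hmono' k hkN).monotoneOn hy hb hr

end PhiSec

/-- a compatible system of weak contractions is a D-system, i.e.
`𝓓_h` is dense in `[0,1]`. -/
theorem stmt5 (N : ℕ) (hN : 2 ≤ N) (h : ℕ → ℝ → ℝ)
    (hcomp : CompatibleSystem N h)
    (hwc : ∀ i < N, IsWeakContraction (h i)) :
    Set.Icc (0:ℝ) 1 ⊆ closure (DSet N h) := by
  obtain ⟨hmaps, hcont, hmono, h00, hchain, hN1⟩ := hcomp
  have hφ : ∀ i < N, ∀ t > 0, phiMod (h i) t < t := fun i hi => (hwc i hi).2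
  intro x hx
  rw [Metric.mem_closure_iff]
  intro ε hε
  obtain ⟨m, hm⟩ := exists_iter_lt hN hmaps hφ hε
  obtain ⟨σ, hlen, hσN, hl, hr⟩ := cover hN ⟨hmaps, hcont, hmono, h00, hchain, hN1⟩ (m + 1) x hx
  obtain ⟨-, -, -, hdiam⟩ := word_bounds hN hmaps hmono σ hσN
  refine ⟨wordComp h σ 0, ⟨σ, ?_, hσN, 0, Or.inl rfl, rfl⟩, ?_⟩
  · intro hnil; rw [hnil] at hlen; simp at hlen
  · rw [Real.dist_eq, abs_of_nonneg (by linarith)]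
    have h1 : (PhiMax N h)^[σ.length] 1 ≤ (PhiMax N h)^[m] 1 := by
      rw [hlen]; exact iter_anti hN hmaps hφ m
    linarith
end

section
/- Every LF system {h_i}_{i∈𝓘_N} on [0,1] is a weakly contractive system: it is a compatible system and each h_i is a weak contraction on [0,1]. If moreover the strict condition (2') holds, namely 0 < a_i d_i − b_i c_i < min{d_i², (c_i+d_i)²} for every i ∈ 𝓘_N, then each h_i is a contraction, i.e., Lip(h_i) := sup_{x≠y} |h_i(x)−h_i(y)|/|x−y| < 1. -/
open Set Filter Topology

/-- An LF system: `h i x = (a i * x + b i) / (c i * x + d i)` on `[0,1]`, with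
(1) `c i + d i > 0`, `d i > 0`; (2) `0 < a i d i − b i c i ≤ min (d i)² (c i + d i)²`;
(3) `b 0 = 0`, `(a i + b i)/(c i + d i) = b (i+1) / d (i+1)` for `i + 1 < N`, and
`(a (N-1) + b (N-1))/(c (N-1) + d (N-1)) = 1`. -/
def IsLFSystem (N : ℕ) (a b c d : ℕ → ℝ) (h : ℕ → ℝ → ℝ) : Prop :=
  (∀ i < N, ∀ x ∈ Set.Icc (0:ℝ) 1, h i x = (a i * x + b i) / (c i * x + d i)) ∧
  (∀ i < N, 0 < c i + d i ∧ 0 < d i) ∧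
  (∀ i < N, 0 < a i * d i - b i * c i ∧
    a i * d i - b i * c i ≤ min ((d i) ^ 2) ((c i + d i) ^ 2)) ∧
  b 0 = 0 ∧
  (∀ i, i + 1 < N → (a i + b i) / (c i + d i) = b (i + 1) / d (i + 1)) ∧
  (a (N - 1) + b (N - 1)) / (c (N - 1) + d (N - 1)) = 1

namespace S6

lemma denom_lb {C D : ℝ} {x : ℝ} (hx : x ∈ Icc (0:ℝ) 1) :
    min D (C + D) ≤ C * x + D := by
  obtain ⟨h0, h1⟩ := hx
  nlinarith [mul_nonneg (sub_nonneg.2 h1) (sub_nonneg.2 (min_le_left D (C+D))),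
    mul_nonneg h0 (sub_nonneg.2 (min_le_right D (C+D)))]

lemma zero_mem_oset (h : ℝ → ℝ) {s : ℝ} (hs : 0 ≤ s) :
    (0:ℝ) ∈ {d | ∃ x ∈ Set.Icc (0:ℝ) 1, ∃ y ∈ Set.Icc (0:ℝ) 1, |x - y| ≤ s ∧ d = |h x - h y|} :=
  ⟨0, ⟨le_refl 0, zero_le_one⟩, 0, ⟨le_refl 0, zero_le_one⟩, by simpa using hs, by simp⟩

lemma bdd_oset {h : ℝ → ℝ} (hlip : ∀ x ∈ Icc (0:ℝ) 1, ∀ y ∈ Icc (0:ℝ) 1, |h x - h y| ≤ |x - y|)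
    (s : ℝ) :
    BddAbove {d | ∃ x ∈ Set.Icc (0:ℝ) 1, ∃ y ∈ Set.Icc (0:ℝ) 1, |x - y| ≤ s ∧ d = |h x - h y|} := by
  refine ⟨1, fun v hv => ?_⟩
  obtain ⟨x, hx, y, hy, hxy, rfl⟩ := hv
  calc |h x - h y| ≤ |x - y| := hlip x hx y hy
    _ ≤ 1 := by
      rw [abs_sub_le_iff]
      constructor <;> linarith [hx.1, hx.2, hy.1, hy.2]

lemma omega_nonneg {h : ℝ → ℝ}
    (hlip : ∀ x ∈ Icc (0:ℝ) 1, ∀ y ∈ Icc (0:ℝ) 1, |h x - h y| ≤ |x - y|)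
    {s : ℝ} (hs : 0 ≤ s) : 0 ≤ omegaMod h s :=
  le_csSup (bdd_oset hlip s) (zero_mem_oset h hs)

lemma omega_le_add {h : ℝ → ℝ}
    (hlip : ∀ x ∈ Icc (0:ℝ) 1, ∀ y ∈ Icc (0:ℝ) 1, |h x - h y| ≤ |x - y|)
    {t ε : ℝ} (ht : 0 < t) (hε : 0 < ε) :
    omegaMod h (t + ε) ≤ omegaMod h t + ε := by
  have hbt := bdd_oset hlip t
  have hω0 := omega_nonneg hlip ht.le
  apply Real.sSup_le _ (by linarith)
  rintro v ⟨x, hx, y, hy, hxy, rfl⟩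
  by_cases hc : |x - y| ≤ t
  · have : |h x - h y| ≤ omegaMod h t := le_csSup hbt ⟨x, hx, y, hy, hc, rfl⟩
    linarith
  · push_neg at hc
    rcases le_total x y with hxy' | hxy'
    · have hyx : y - x > t := by
        rw [abs_sub_comm, abs_of_nonneg (by linarith)] at hc; linarith
      have hyx2 : y - x ≤ t + ε := by
        rw [abs_sub_comm, abs_of_nonneg (by linarith)] at hxy; linarith
      set z := x + t with hz
      have hzI : z ∈ Icc (0:ℝ) 1 := ⟨by linarith [hx.1], by linarith [hy.2]⟩
      have h1 : |h x - h z| ≤ omegaMod h t :=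
        le_csSup hbt ⟨x, hx, z, hzI, by rw [abs_sub_comm, abs_of_nonneg (by linarith)]; simp [hz], rfl⟩
      have h2 : |h z - h y| ≤ ε := by
        calc |h z - h y| ≤ |z - y| := hlip z hzI y hy
          _ ≤ ε := by rw [abs_sub_comm, abs_of_nonneg (by linarith)]; simp [hz]; linarith
      calc |h x - h y| ≤ |h x - h z| + |h z - h y| := abs_sub_le _ _ _
        _ ≤ omegaMod h t + ε := add_le_add h1 h2
    · have hyx : x - y > t := by
        rw [abs_of_nonneg (by linarith)] at hc; linarith
      have hyx2 : x - y ≤ t + ε := by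
        rw [abs_of_nonneg (by linarith)] at hxy; linarith
      set z := x - t with hz
      have hzI : z ∈ Icc (0:ℝ) 1 := ⟨by linarith [hy.1], by linarith [hx.2]⟩
      have h1 : |h x - h z| ≤ omegaMod h t :=
        le_csSup hbt ⟨x, hx, z, hzI, by rw [abs_of_nonneg (by linarith)]; simp [hz], rfl⟩
      have h2 : |h z - h y| ≤ ε := by
        calc |h z - h y| ≤ |z - y| := hlip z hzI y hy
          _ ≤ ε := by rw [abs_of_nonneg (by linarith)]; simp [hz]; linarith
      calc |h x - h y| ≤ |h x - h z| + |h z - h y| := abs_sub_le _ _ _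
        _ ≤ omegaMod h t + ε := add_le_add h1 h2

lemma phi_le_omega {h : ℝ → ℝ}
    (hlip : ∀ x ∈ Icc (0:ℝ) 1, ∀ y ∈ Icc (0:ℝ) 1, |h x - h y| ≤ |x - y|)
    {t : ℝ} (ht : 0 < t) : phiMod h t ≤ omegaMod h t := by
  have hbb : BddBelow (omegaMod h '' Set.Ioi t) := by
    refine ⟨0, fun v hv => ?_⟩
    obtain ⟨s, hs, rfl⟩ := hv
    exact omega_nonneg hlip (le_of_lt (lt_trans ht hs))
  have key : ∀ ε > 0, phiMod h t ≤ omegaMod h t + ε := by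
    intro ε hε
    calc phiMod h t ≤ omegaMod h (t + ε) :=
          csInf_le hbb ⟨t + ε, by simp [hε], rfl⟩
      _ ≤ omegaMod h t + ε := omega_le_add hlip ht hε
  exact le_of_forall_pos_le_add key

variable {A B C D : ℝ}

lemma lf_diff (hD : 0 < D) (hCD : 0 < C + D) {x y : ℝ}
    (hx : x ∈ Icc (0:ℝ) 1) (hy : y ∈ Icc (0:ℝ) 1) :
    (A*x+B)/(C*x+D) - (A*y+B)/(C*y+D) = ((A*D - B*C)*(x-y))/((C*x+D)*(C*y+D)) := by
  have h1 : (0:ℝ) < C*x+D := lt_of_lt_of_le (lt_min hD hCD) (denom_lb hx)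
  have h2 : (0:ℝ) < C*y+D := lt_of_lt_of_le (lt_min hD hCD) (denom_lb hy)
  rw [div_sub_div _ _ h1.ne' h2.ne']
  congr 1
  ring

lemma prod_lb_aux {m s p q : ℝ} (hm : 0 < m) (hs : 0 ≤ s) (hp : m ≤ p) (hq : m + s ≤ q) :
    m * (m + s) ≤ p * q :=
  mul_le_mul hp hq (by linarith) (by linarith)

lemma denom_prod_lb (hD : 0 < D) (hCD : 0 < C + D) {x y : ℝ}
    (hx : x ∈ Icc (0:ℝ) 1) (hy : y ∈ Icc (0:ℝ) 1) :
    (min D (C+D)) * (min D (C+D) + |C| * |x - y|) ≤ (C*x+D)*(C*y+D) := by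
  set m := min D (C+D) with hm'
  have hm : 0 < m := lt_min hD hCD
  have hx' : m ≤ C*x + D := denom_lb hx
  have hy' : m ≤ C*y + D := denom_lb hy
  have hsn : 0 ≤ |C| * |x - y| := by positivity
  rcases le_total x y with hxy | hxy
  · rw [abs_sub_comm, abs_of_nonneg (by linarith : (0:ℝ) ≤ y - x)]
    rcases le_total 0 C with hC | hC
    · rw [abs_of_nonneg hC]
      exact prod_lb_aux hm (by nlinarith) hx' (by nlinarith)
    · rw [abs_of_nonpos hC, mul_comm (C*x+D)]
      exact prod_lb_aux hm (by nlinarith) hy' (by nlinarith)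
  · rw [abs_of_nonneg (by linarith : (0:ℝ) ≤ x - y)]
    rcases le_total 0 C with hC | hC
    · rw [abs_of_nonneg hC, mul_comm (C*x+D)]
      exact prod_lb_aux hm (by nlinarith) hy' (by nlinarith)
    · rw [abs_of_nonpos hC]
      exact prod_lb_aux hm (by nlinarith) hx' (by nlinarith)

lemma lf_abs_le (hD : 0 < D) (hCD : 0 < C + D) (hdet : 0 < A*D - B*C) {x y t : ℝ}
    (hx : x ∈ Icc (0:ℝ) 1) (hy : y ∈ Icc (0:ℝ) 1) (hxyt : |x - y| ≤ t) (ht : 0 < t) :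
    |(A*x+B)/(C*x+D) - (A*y+B)/(C*y+D)| ≤
      (A*D - B*C)*t / ((min D (C+D)) * (min D (C+D) + |C| * t)) := by
  set m := min D (C+D) with hm'
  have hm : 0 < m := lt_min hD hCD
  have h1 : (0:ℝ) < C*x+D := lt_of_lt_of_le hm (denom_lb hx)
  have h2 : (0:ℝ) < C*y+D := lt_of_lt_of_le hm (denom_lb hy)
  rw [lf_diff hD hCD hx hy, abs_div, abs_mul, abs_of_pos hdet,
    abs_of_pos (mul_pos h1 h2)]
  have h0 : (0:ℝ) ≤ |C| * t := by positivity
  have hd : (0:ℝ) < m * (m + |C| * t) := mul_pos hm (by linarith)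
  rw [div_le_div_iff₀ (by positivity) hd]
  have hprod := denom_prod_lb hD hCD hx hy
  have hsn : 0 ≤ |x - y| := abs_nonneg _
  have hCn : 0 ≤ |C| := abs_nonneg _
  nlinarith [mul_le_mul_of_nonneg_left hprod (by positivity : 0 ≤ (A*D-B*C)*t),
    mul_nonneg (mul_nonneg hdet.le hm.le) (mul_nonneg hm.le (sub_nonneg.2 hxyt))]

end S6

/-- every LF system is a weakly contractive system (a compatible system
of weak contractions); under the strict condition (2') each `h i` is a contraction,
i.e. has Lipschitz constant `< 1` on `[0,1]`. -/
theorem stmt6 (N : ℕ) (hN : 2 ≤ N) (a b c d : ℕ → ℝ) (h : ℕ → ℝ → ℝ)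
    (hLF : IsLFSystem N a b c d h) :
    CompatibleSystem N h ∧
    (∀ i < N, IsWeakContraction (h i)) ∧
    ((∀ i < N, a i * d i - b i * c i < min ((d i) ^ 2) ((c i + d i) ^ 2)) →
      ∀ i < N, ∃ K : ℝ, 0 ≤ K ∧ K < 1 ∧
        ∀ x ∈ Set.Icc (0:ℝ) 1, ∀ y ∈ Set.Icc (0:ℝ) 1, |h i x - h i y| ≤ K * |x - y|) := by
  obtain ⟨hform, hpos, hdet, hb0, hchain, hlast⟩ := hLF
  have hNpos : 0 < N := by omega
  have hmem0 : (0:ℝ) ∈ Icc (0:ℝ) 1 := ⟨le_refl 0, zero_le_one⟩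
  have hmem1 : (1:ℝ) ∈ Icc (0:ℝ) 1 := ⟨zero_le_one, le_refl 1⟩
  have hepos : ∀ i < N, 0 < min (d i) (c i + d i) :=
    fun i hi => lt_min (hpos i hi).2 (hpos i hi).1
  have hminsq : ∀ i : ℕ, min ((d i) ^ 2) ((c i + d i) ^ 2) ≤ (min (d i) (c i + d i))^2 := by
    intro i
    rcases min_cases (d i) (c i + d i) with ⟨he, _⟩ | ⟨he, _⟩ <;> rw [he]
    · exact min_le_left _ _
    · exact min_le_right _ _
  have hdet_le : ∀ i < N, a i * d i - b i * c i ≤ (min (d i) (c i + d i))^2 :=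
    fun i hi => le_trans (hdet i hi).2 (hminsq i)
  have hdenpos : ∀ i < N, ∀ x ∈ Icc (0:ℝ) 1, 0 < c i * x + d i :=
    fun i hi x hx => lt_of_lt_of_le (hepos i hi) (S6.denom_lb hx)
  have hdiff : ∀ i < N, ∀ x ∈ Icc (0:ℝ) 1, ∀ y ∈ Icc (0:ℝ) 1,
      h i x - h i y = ((a i * d i - b i * c i)*(x-y))/((c i * x + d i)*(c i * y + d i)) := by
    intro i hi x hx y hy
    rw [hform i hi x hx, hform i hi y hy]
    exact S6.lf_diff (hpos i hi).2 (hpos i hi).1 hx hy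
  have hmono : ∀ i < N, StrictMonoOn (h i) (Icc (0:ℝ) 1) := by
    intro i hi x hx y hy hxy
    have hd := hdiff i hi y hy x hx
    have hden : 0 < (c i * y + d i)*(c i * x + d i) :=
      mul_pos (hdenpos i hi y hy) (hdenpos i hi x hx)
    have : 0 < h i y - h i x := by
      rw [hd]; exact div_pos (mul_pos (hdet i hi).1 (by linarith)) hden
    linarith
  have hlipK : ∀ i < N, ∀ x ∈ Icc (0:ℝ) 1, ∀ y ∈ Icc (0:ℝ) 1,
      |h i x - h i y| ≤ ((a i * d i - b i * c i)/(min (d i) (c i + d i))^2) * |x - y| := by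
    intro i hi x hx y hy
    have h1 := hdenpos i hi x hx
    have h2 := hdenpos i hi y hy
    have he := hepos i hi
    rw [hdiff i hi x hx y hy, abs_div, abs_mul, abs_of_pos (hdet i hi).1,
      abs_of_pos (mul_pos h1 h2), div_mul_eq_mul_div]
    have key : (min (d i) (c i + d i))^2 ≤ (c i * x + d i)*(c i * y + d i) := by
      have := S6.denom_prod_lb (hpos i hi).2 (hpos i hi).1 hx hy
      nlinarith [mul_nonneg (abs_nonneg (c i)) (abs_nonneg (x - y))]
    rw [div_le_div_iff₀ (mul_pos h1 h2) (pow_pos he 2)]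
    have hnn : 0 ≤ (a i * d i - b i * c i) * |x - y| :=
      mul_nonneg (hdet i hi).1.le (abs_nonneg _)
    nlinarith [mul_le_mul_of_nonneg_left key hnn]
  have hlip1 : ∀ i < N, ∀ x ∈ Icc (0:ℝ) 1, ∀ y ∈ Icc (0:ℝ) 1,
      |h i x - h i y| ≤ |x - y| := by
    intro i hi x hx y hy
    have hK : (a i * d i - b i * c i)/(min (d i) (c i + d i))^2 ≤ 1 :=
      (div_le_one (pow_pos (hepos i hi) 2)).2 (hdet_le i hi)
    calc |h i x - h i y| ≤ ((a i * d i - b i * c i)/(min (d i) (c i + d i))^2) * |x - y| :=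
          hlipK i hi x hx y hy
      _ ≤ 1 * |x - y| := mul_le_mul_of_nonneg_right hK (abs_nonneg _)
      _ = |x - y| := one_mul _
  have h00 : h 0 0 = 0 := by
    rw [hform 0 hNpos 0 hmem0]; simp [hb0]
  have hstep : ∀ i, 1 ≤ i → i < N → h (i - 1) 1 = h i 0 := by
    intro i h1 h2
    have hc := hchain (i-1) (by omega)
    have heq : i - 1 + 1 = i := by omega
    rw [heq] at hc
    rw [hform (i-1) (by omega) 1 hmem1, hform i h2 0 hmem0,
      show a (i-1) * 1 + b (i-1) = a (i-1) + b (i-1) by ring,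
      show c (i-1) * 1 + d (i-1) = c (i-1) + d (i-1) by ring, hc]
    norm_num
  have hend : h (N-1) 1 = 1 := by
    rw [hform (N-1) (by omega) 1 hmem1,
      show a (N-1) * 1 + b (N-1) = a (N-1) + b (N-1) by ring,
      show c (N-1) * 1 + d (N-1) = c (N-1) + d (N-1) by ring]
    exact hlast
  have hends : ∀ i < N, h i 0 < h i 1 := fun i hi => hmono i hi hmem0 hmem1 one_pos
  have hup : ∀ i < N, 0 ≤ h i 0 := by
    intro i
    induction i with
    | zero => intro _; rw [h00]
    | succ n ih =>
      intro hn
      have hn' : n < N := by omega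
      have hst : h n 1 = h (n+1) 0 := by
        have := hstep (n+1) (by omega) hn
        simpa using this
      rw [← hst]
      exact le_of_lt (lt_of_le_of_lt (ih hn') (hends n hn'))
  have hdown : ∀ i < N, h i 1 ≤ 1 := by
    have key : ∀ k, ∀ i, i < N → N - 1 - i ≤ k → h i 1 ≤ 1 := by
      intro k
      induction k with
      | zero =>
        intro i hi hk
        have : i = N - 1 := by omega
        rw [this, hend]
      | succ k ih =>
        intro i hi hk
        by_cases hc : i = N - 1
        · rw [hc, hend]
        · have h1 : i + 1 < N := by omega
          have hst : h i 1 = h (i+1) 0 := by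
            have := hstep (i+1) (by omega) h1
            simpa using this
          rw [hst]
          exact le_of_lt (lt_of_lt_of_le (hends (i+1) h1) (ih (i+1) h1 (by omega)))
    intro i hi; exact key (N-1-i) i hi le_rfl
  have hmaps : ∀ i < N, MapsTo (h i) (Icc (0:ℝ) 1) (Icc (0:ℝ) 1) := by
    intro i hi x hx
    have hmo := (hmono i hi).monotoneOn
    exact ⟨le_trans (hup i hi) (hmo hmem0 hx hx.1),
      le_trans (hmo hx hmem1 hx.2) (hdown i hi)⟩
  have hcont : ∀ i < N, ContinuousOn (h i) (Icc (0:ℝ) 1) := by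
    intro i hi
    have hcr : ContinuousOn (fun x => (a i * x + b i)/(c i * x + d i)) (Icc (0:ℝ) 1) :=
      ContinuousOn.div (by fun_prop) (by fun_prop) (fun x hx => (hdenpos i hi x hx).ne')
    exact hcr.congr (fun x hx => hform i hi x hx)
  have hcompat : CompatibleSystem N h := ⟨hmaps, hcont, hmono, h00, hstep, hend⟩
  have hL : ∀ i < N, h i 1 - h i 0 < 1 := by
    intro i hi
    by_cases hc : i = N - 1
    · have h1 : 1 ≤ i := by omega
      have h2 : h (i-1) 1 = h i 0 := hstep i h1 hi
      have h3 : 0 ≤ h (i-1) 0 := hup (i-1) (by omega)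
      have h4 := hends (i-1) (by omega)
      have h5 := hdown i hi
      linarith [h2 ▸ h4]
    · have h1 : i + 1 < N := by omega
      have h2 : h i 1 = h (i+1) 0 := by simpa using hstep (i+1) (by omega) h1
      have h3 := hends (i+1) h1
      have h4 := hdown (i+1) h1
      have h5 := hup i hi
      linarith [h2 ▸ h3]
  have hΔlt : ∀ i < N, a i * d i - b i * c i < d i * (c i + d i) := by
    intro i hi
    have hd := hdiff i hi 1 hmem1 0 hmem0
    have hden : 0 < (c i * 1 + d i)*(c i * 0 + d i) :=
      mul_pos (hdenpos i hi 1 hmem1) (hdenpos i hi 0 hmem0)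
    have hl := hL i hi
    rw [hd, div_lt_one hden] at hl
    nlinarith [hl]
  have homega : ∀ i < N, ∀ t : ℝ, 0 < t → omegaMod (h i) t < t := by
    intro i hi t ht
    have he := hepos i hi
    have h0 : (0:ℝ) ≤ |c i| * t := by positivity
    have hGnn : 0 ≤ (a i * d i - b i * c i) * t /
        ((min (d i) (c i + d i)) * (min (d i) (c i + d i) + |c i| * t)) :=
      div_nonneg (mul_nonneg (hdet i hi).1.le ht.le) (by nlinarith)
    have h1 : omegaMod (h i) t ≤ (a i * d i - b i * c i) * t /
        ((min (d i) (c i + d i)) * (min (d i) (c i + d i) + |c i| * t)) := by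
      apply Real.sSup_le _ hGnn
      rintro v ⟨x, hx, y, hy, hxy, rfl⟩
      rw [hform i hi x hx, hform i hi y hy]
      exact S6.lf_abs_le (hpos i hi).2 (hpos i hi).1 (hdet i hi).1 hx hy hxy ht
    have h2 : (a i * d i - b i * c i) * t /
        ((min (d i) (c i + d i)) * (min (d i) (c i + d i) + |c i| * t)) < t := by
      rw [div_lt_iff₀ (by nlinarith)]
      rcases eq_or_ne (c i) 0 with hc | hc
      · have heD : min (d i) (c i + d i) = d i := by rw [hc, zero_add, min_self]
        have hΔ := hΔlt i hi
        rw [hc] at hΔ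
        rw [heD, hc]
        simp only [abs_zero]
        nlinarith [mul_lt_mul_of_pos_left hΔ ht]
      · have hcpos : 0 < |c i| := abs_pos.2 hc
        have hΔ := hdet_le i hi
        nlinarith [mul_le_mul_of_nonneg_right hΔ ht.le,
          mul_pos (mul_pos he hcpos) (mul_pos ht ht)]
    linarith
  refine ⟨hcompat, ?_, ?_⟩
  · intro i hi
    refine ⟨hmaps i hi, fun t ht => ?_⟩
    calc phiMod (h i) t ≤ omegaMod (h i) t := S6.phi_le_omega (hlip1 i hi) ht
      _ < t := homega i hi t ht
  · intro h2' i hi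
    refine ⟨(a i * d i - b i * c i)/(min (d i) (c i + d i))^2,
      div_nonneg (hdet i hi).1.le (by positivity), ?_, fun x hx y hy => hlipK i hi x hx y hy⟩
    rw [div_lt_one (pow_pos (hepos i hi) 2)]
    exact lt_of_lt_of_le (h2' i hi) (hminsq i)
end

section
/- Let {h_i}_{i∈𝓘_N} be an LF system on [0,1]. Then there exists a constant c ∈ (0,1) such that for every finite word σ = (σ_1,…,σ_n) ∈ (𝓘_N)^n (n ≥ 1), one has h_{σ_1}∘⋯∘h_{σ_n}(1) − h_{σ_1}∘⋯∘h_{σ_n}(0) ≥ c^n. -/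
open Set Filter Topology

/-- for an LF system there is `c ∈ (0,1)` with
`h_σ(1) − h_σ(0) ≥ c^{|σ|}` for every nonempty word `σ`. -/
theorem stmt7 (N : ℕ) (hN : 2 ≤ N) (a b c d : ℕ → ℝ) (h : ℕ → ℝ → ℝ)
    (hLF : IsLFSystem N a b c d h) :
    ∃ cst : ℝ, 0 < cst ∧ cst < 1 ∧
      ∀ σ : List ℕ, σ ≠ [] → (∀ i ∈ σ, i < N) →
        cst ^ σ.length ≤ wordComp h σ 1 - wordComp h σ 0 := by
  obtain ⟨hform, hpos, hdet, hb0, hchain, hlast⟩ := hLF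
  set M : ℕ → ℝ := fun i => max (d i) (c i + d i) with hMdef
  set k : ℕ → ℝ := fun i => (a i * d i - b i * c i) / (M i) ^ 2 with hkdef
  have hMpos : ∀ i < N, 0 < M i := fun i hi => lt_max_of_lt_left (hpos i hi).2
  have hkpos : ∀ i < N, 0 < k i := fun i hi =>
    div_pos (hdet i hi).1 (pow_pos (hMpos i hi) 2)
  have hk0 : k 0 ≤ 1 := by
    have h0 : (0:ℕ) < N := by omega
    have hd := (hdet 0 h0).2
    have hM0 := hMpos 0 h0
    rw [hkdef]
    rw [div_le_one (pow_pos hM0 2)]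
    calc a 0 * d 0 - b 0 * c 0 ≤ min ((d 0)^2) ((c 0 + d 0)^2) := hd
      _ ≤ (d 0)^2 := min_le_left _ _
      _ ≤ (M 0)^2 := by
          apply pow_le_pow_left₀ (hpos 0 h0).2.le (le_max_left _ _)
  -- b i ≥ 0
  have hbnn : ∀ i, i < N → 0 ≤ b i := by
    intro i
    induction i with
    | zero => intro _; rw [hb0]
    | succ n ihn =>
      intro hn1
      have hn : n < N := by omega
      have hbn := ihn hn
      have hch := hchain n hn1
      have hab : 0 ≤ a n + b n := by
        nlinarith [(hdet n hn).1, (hpos n hn).1, (hpos n hn).2,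
          mul_nonneg hbn (hpos n hn).1.le]
      have hq : 0 ≤ b (n+1) / d (n+1) := by
        rw [← hch]; exact div_nonneg hab (hpos n hn).1.le
      have hd1 : 0 < d (n+1) := (hpos (n+1) hn1).2
      have := mul_nonneg hq hd1.le
      rwa [div_mul_cancel₀ _ hd1.ne'] at this
  -- a i + b i ≤ c i + d i
  have htopLast : a (N-1) + b (N-1) ≤ c (N-1) + d (N-1) := by
    have hN1 : N - 1 < N := by omega
    rw [div_eq_one_iff_eq (hpos (N-1) hN1).1.ne'] at hlast
    linarith
  have htop : ∀ i < N, a i + b i ≤ c i + d i := by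
    have hstep : ∀ j, ∀ i, i < N → N ≤ i + 1 + j → a i + b i ≤ c i + d i := by
      intro j
      induction j with
      | zero =>
        intro i hi hij
        have : i = N - 1 := by omega
        rw [this]; exact htopLast
      | succ j ihj =>
        intro i hi hij
        by_cases hc : i + 1 < N
        · have h2 := ihj (i+1) hc (by omega)
          have hch := hchain i hc
          have hb1 := hbnn (i+1) hc
          have hpos1 := hpos (i+1) hc
          have hdet1 := (hdet (i+1) hc).1
          have hbd : b (i+1) ≤ d (i+1) := by
            nlinarith [hpos1.1, hpos1.2, mul_le_mul_of_nonneg_left h2 hpos1.2.le]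
          have hone : (a i + b i) / (c i + d i) ≤ 1 := by
            rw [hch]; rw [div_le_one hpos1.2]; exact hbd
          rw [div_le_one (hpos i hi).1] at hone
          exact hone
        · have : i = N - 1 := by omega
          rw [this]; exact htopLast
    intro i hi
    exact hstep N i hi (by omega)
  have hble : ∀ i < N, b i ≤ d i := by
    intro i hi
    have h1 := (hdet i hi).1
    have h2 := htop i hi
    have h3 := (hpos i hi).1
    have h4 := (hpos i hi).2
    nlinarith [mul_le_mul_of_nonneg_left h2 h4.le]
  -- denominators positive
  have hden : ∀ i < N, ∀ x ∈ Icc (0:ℝ) 1, 0 < c i * x + d i := by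
    intro i hi x hx
    obtain ⟨hx0, hx1⟩ := hx
    rcases le_or_gt (c i) 0 with hc | hc
    · nlinarith [(hpos i hi).1, mul_nonneg (sub_nonneg.2 hx1) (neg_nonneg.2 hc)]
    · nlinarith [mul_nonneg hx0 hc.le, (hpos i hi).2]
  have hdenM : ∀ i < N, ∀ x ∈ Icc (0:ℝ) 1, c i * x + d i ≤ M i := by
    intro i hi x hx
    obtain ⟨hx0, hx1⟩ := hx
    have h1 : d i ≤ M i := le_max_left _ _
    have h2 : c i + d i ≤ M i := le_max_right _ _
    nlinarith [mul_nonneg hx0 (sub_nonneg.2 h2),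
      mul_nonneg (sub_nonneg.2 hx1) (sub_nonneg.2 h1)]
  -- h maps [0,1] to [0,1]
  have hmaps : ∀ i < N, ∀ x ∈ Icc (0:ℝ) 1, h i x ∈ Icc (0:ℝ) 1 := by
    intro i hi x hx
    rw [hform i hi x hx]
    have hd := hden i hi x hx
    obtain ⟨hx0, hx1⟩ := hx
    constructor
    · apply div_nonneg _ hd.le
      nlinarith [mul_nonneg hx0 (hdet i hi).1.le,
        mul_nonneg (hbnn i hi) hd.le, (hpos i hi).2]
    · rw [div_le_one hd]
      nlinarith [mul_nonneg hx0 (sub_nonneg.2 (htop i hi)),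
        mul_nonneg (sub_nonneg.2 hx1) (sub_nonneg.2 (hble i hi))]
  -- key difference estimate
  have hdiff : ∀ i < N, ∀ x ∈ Icc (0:ℝ) 1, ∀ y ∈ Icc (0:ℝ) 1, x ≤ y →
      k i * (y - x) ≤ h i y - h i x := by
    intro i hi x hx y hy hxy
    rw [hform i hi x hx, hform i hi y hy]
    have hdx := hden i hi x hx
    have hdy := hden i hi y hy
    have key : (a i * y + b i) / (c i * y + d i) - (a i * x + b i) / (c i * x + d i)
        = ((a i * d i - b i * c i) * (y - x)) / ((c i * x + d i) * (c i * y + d i)) := by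
      rw [div_sub_div _ _ hdy.ne' hdx.ne']
      congr 1 <;> ring
    have keq : k i * (y - x) = ((a i * d i - b i * c i) * (y - x)) / ((M i)^2) := by
      rw [hkdef]; ring
    rw [key, keq]
    apply div_le_div_of_nonneg_left
    · exact mul_nonneg (hdet i hi).1.le (sub_nonneg.2 hxy)
    · exact mul_pos hdx hdy
    · calc (c i * x + d i) * (c i * y + d i) ≤ M i * M i :=
            mul_le_mul (hdenM i hi x hx) (hdenM i hi y hy) hdy.le (hMpos i hi).le
        _ = (M i)^2 := (sq (M i)).symm
  -- the constant
  have hne : (Finset.range N).Nonempty := ⟨0, Finset.mem_range.2 (by omega)⟩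
  set I := (Finset.range N).inf' hne k with hIdef
  have hIpos : 0 < I := by
    rw [hIdef, Finset.lt_inf'_iff]
    exact fun i hi => hkpos i (Finset.mem_range.1 hi)
  have hIle : I ≤ 1 := le_trans (Finset.inf'_le k (Finset.mem_range.2 (by omega))) hk0
  refine ⟨I / 2, by linarith, by linarith, ?_⟩
  have hcstk : ∀ i < N, I / 2 ≤ k i := by
    intro i hi
    have := Finset.inf'_le k (Finset.mem_range.2 hi)
    linarith
  have main : ∀ σ : List ℕ, (∀ i ∈ σ, i < N) →
      wordComp h σ 0 ∈ Icc (0:ℝ) 1 ∧ wordComp h σ 1 ∈ Icc (0:ℝ) 1 ∧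
      (I/2) ^ σ.length ≤ wordComp h σ 1 - wordComp h σ 0 := by
    intro σ
    induction σ with
    | nil =>
      intro _
      refine ⟨?_, ?_, ?_⟩ <;> simp [wordComp]
    | cons i τ ih =>
      intro hall
      have hi : i < N := hall i (by simp)
      obtain ⟨hx, hy, hle⟩ := ih (fun j hj => hall j (by simp [hj]))
      have hcpos : (0:ℝ) < I/2 := by linarith
      have hxy : wordComp h τ 0 ≤ wordComp h τ 1 := by
        nlinarith [pow_pos hcpos τ.length]
      have e0 : wordComp h (i::τ) 0 = h i (wordComp h τ 0) := rfl
      have e1 : wordComp h (i::τ) 1 = h i (wordComp h τ 1) := rfl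
      refine ⟨?_, ?_, ?_⟩
      · rw [e0]; exact hmaps i hi _ hx
      · rw [e1]; exact hmaps i hi _ hy
      · rw [e1, e0, List.length_cons, pow_succ]
        have hd2 := hdiff i hi _ hx _ hy hxy
        calc (I/2) ^ τ.length * (I/2)
            ≤ (wordComp h τ 1 - wordComp h τ 0) * k i :=
              mul_le_mul hle (hcstk i hi) hcpos.le (by linarith)
          _ = k i * (wordComp h τ 1 - wordComp h τ 0) := by ring
          _ ≤ h i (wordComp h τ 1) - h i (wordComp h τ 0) := hd2
  intro σ _ hall
  exact (main σ hall).2.2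
end

section
/- Let {h_i}_{i∈𝓘_N} be an LF system on [0,1]. Then there exists a constant C > 0 such that for every finite word σ = (σ_1,…,σ_n) ∈ (𝓘_N)^n (n ≥ 1), one has h_{σ_1}∘⋯∘h_{σ_n}(1) − h_{σ_1}∘⋯∘h_{σ_n}(0) ≤ C/n. -/
open Set Filter Topology

set_option maxHeartbeats 1000000 in
/-- for an LF system there is `C > 0` with
`h_σ(1) − h_σ(0) ≤ C / |σ|` for every nonempty word `σ`. -/
theorem stmt8 (N : ℕ) (hN : 2 ≤ N) (a b c d : ℕ → ℝ) (h : ℕ → ℝ → ℝ)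
    (hLF : IsLFSystem N a b c d h) :
    ∃ C : ℝ, 0 < C ∧
      ∀ σ : List ℕ, σ ≠ [] → (∀ i ∈ σ, i < N) →
        wordComp h σ 1 - wordComp h σ 0 ≤ C / (σ.length : ℝ) := by
  obtain ⟨hf, hpos, hdet, hb0, hchain, hlast⟩ := hLF
  -- basic facts
  have hΔpos : ∀ i, i < N → 0 < a i * d i - b i * c i := fun i hi => (hdet i hi).1
  have hΔd : ∀ i, i < N → a i * d i - b i * c i ≤ (d i) ^ 2 :=
    fun i hi => le_trans (hdet i hi).2 (min_le_left _ _)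
  have hΔcd : ∀ i, i < N → a i * d i - b i * c i ≤ (c i + d i) ^ 2 :=
    fun i hi => le_trans (hdet i hi).2 (min_le_right _ _)
  -- denominator lower bound
  have hPge : ∀ i, i < N → ∀ x : ℝ, 0 ≤ x → x ≤ 1 →
      min (d i) (c i + d i) ≤ c i * x + d i := by
    intro i hi x hx0 hx1
    rcases le_or_gt 0 (c i) with hc | hc
    · calc min (d i) (c i + d i) ≤ d i := min_le_left _ _
        _ ≤ c i * x + d i := by nlinarith
    · calc min (d i) (c i + d i) ≤ c i + d i := min_le_right _ _
        _ ≤ c i * x + d i := by nlinarith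
  have hPpos : ∀ i, i < N → ∀ x : ℝ, 0 ≤ x → x ≤ 1 → 0 < c i * x + d i := by
    intro i hi x hx0 hx1
    have := hPge i hi x hx0 hx1
    have hm : 0 < min (d i) (c i + d i) := lt_min (hpos i hi).2 (hpos i hi).1
    linarith
  -- difference formula
  have hdiff : ∀ i, i < N → ∀ x y : ℝ, 0 ≤ x → x ≤ 1 → 0 ≤ y → y ≤ 1 →
      h i y - h i x = (a i * d i - b i * c i) * (y - x) /
        ((c i * x + d i) * (c i * y + d i)) := by
    intro i hi x y hx0 hx1 hy0 hy1
    rw [hf i hi y (Set.mem_Icc.2 ⟨hy0, hy1⟩), hf i hi x (Set.mem_Icc.2 ⟨hx0, hx1⟩)]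
    have px := hPpos i hi x hx0 hx1
    have py := hPpos i hi y hy0 hy1
    rw [div_sub_div _ _ py.ne' px.ne']
    ring
  -- the endpoint chain
  set E : ℕ → ℝ := fun j => if j < N then b j / d j else 1 with hEdef
  have hE0 : E 0 = 0 := by
    simp only [hEdef]
    rw [if_pos (by omega : 0 < N), hb0, zero_div]
  have hEN : E N = 1 := by simp only [hEdef]; rw [if_neg (lt_irrefl N)]
  have hEstep0 : ∀ j, j < N → h j 0 = E j := by
    intro j hj
    rw [hf j hj 0 (Set.mem_Icc.2 ⟨le_refl _, by norm_num⟩)]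
    simp only [hEdef]
    rw [if_pos hj]
    norm_num
  have hEstep1 : ∀ j, j < N → h j 1 = E (j + 1) := by
    intro j hj
    rw [hf j hj 1 (Set.mem_Icc.2 ⟨by norm_num, le_refl _⟩)]
    simp only [hEdef]
    by_cases hj1 : j + 1 < N
    · rw [if_pos hj1, ← hchain j hj1]; norm_num
    · rw [if_neg hj1]
      have hjN : j = N - 1 := by omega
      rw [hjN]
      rw [mul_one, mul_one]
      exact hlast
  have hElt : ∀ j, j < N → E j < E (j + 1) := by
    intro j hj
    have := hdiff j hj 0 1 (le_refl _) (by norm_num) (by norm_num) (le_refl _)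
    rw [hEstep0 j hj, hEstep1 j hj] at this
    have hP0 := hPpos j hj 0 (le_refl _) (by norm_num)
    have hP1 := hPpos j hj 1 (by norm_num) (le_refl _)
    have hpos' : 0 < (a j * d j - b j * c j) * (1 - 0) /
        ((c j * 0 + d j) * (c j * 1 + d j)) :=
      div_pos (by nlinarith [hΔpos j hj]) (mul_pos hP0 hP1)
    linarith
  have hEsmono : ∀ k, k ≤ N → ∀ j, j < k → E j < E k := by
    intro k
    induction k with
    | zero => intro _ j hj; omega
    | succ n ih =>
      intro hk j hj
      have hn : E n < E (n + 1) := hElt n (by omega)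
      rcases Nat.lt_or_ge j n with hcase | hcase
      · exact (ih (by omega) j hcase).trans hn
      · have : j = n := by omega
        rw [this]; exact hn
  have hEbound : ∀ j, j ≤ N → 0 ≤ E j ∧ E j ≤ 1 := by
    intro j hj
    constructor
    · rcases Nat.eq_zero_or_pos j with h0 | h0
      · rw [h0, hE0]
      · rw [← hE0]; exact (hEsmono j hj 0 h0).le
    · rcases Nat.eq_or_lt_of_le hj with h0 | h0
      · rw [h0, hEN]
      · rw [← hEN]; exact (hEsmono N (le_refl _) j h0).le
  -- each h i maps [0,1] into [E i, E (i+1)]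
  have hmap : ∀ i, i < N → ∀ x : ℝ, 0 ≤ x → x ≤ 1 →
      E i ≤ h i x ∧ h i x ≤ E (i + 1) := by
    intro i hi x hx0 hx1
    have d1 := hdiff i hi 0 x (le_refl _) (by norm_num) hx0 hx1
    have d2 := hdiff i hi x 1 hx0 hx1 (by norm_num) (le_refl _)
    rw [hEstep0 i hi] at d1
    rw [hEstep1 i hi] at d2
    have hP0 := hPpos i hi 0 (le_refl _) (by norm_num)
    have hP1 := hPpos i hi 1 (by norm_num) (le_refl _)
    have hPx := hPpos i hi x hx0 hx1
    constructor
    · have : 0 ≤ (a i * d i - b i * c i) * (x - 0) / ((c i * 0 + d i) * (c i * x + d i)) :=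
        div_nonneg (mul_nonneg (hΔpos i hi).le (by linarith)) (mul_pos hP0 hPx).le
      linarith
    · have : 0 ≤ (a i * d i - b i * c i) * (1 - x) / ((c i * x + d i) * (c i * 1 + d i)) :=
        div_nonneg (mul_nonneg (hΔpos i hi).le (by linarith)) (mul_pos hPx hP1).le
      linarith
  -- strict length bound: each interval has length < 1
  have hlen : ∀ i, i < N → a i * d i - b i * c i < d i * (c i + d i) := by
    intro i hi
    have hdlt : E (i + 1) - E i < 1 := by
      rcases Nat.eq_zero_or_pos i with h0 | h0
      · have h1 : E 1 < E N := hEsmono N (le_refl _) 1 (by omega)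
        rw [h0]
        rw [hE0, hEN] at *
        linarith
      · have h1 : E 0 < E i := hEsmono i (by omega) 0 h0
        have h2 : E (i + 1) ≤ 1 := (hEbound (i + 1) (by omega)).2
        rw [hE0] at h1
        linarith
    have hd := hdiff i hi 0 1 (le_refl _) (by norm_num) (by norm_num) (le_refl _)
    rw [hEstep0 i hi, hEstep1 i hi] at hd
    have hP0 := hPpos i hi 0 (le_refl _) (by norm_num)
    have hP1 := hPpos i hi 1 (by norm_num) (le_refl _)
    have hd' : (a i * d i - b i * c i) * (1 - 0) / ((c i * 0 + d i) * (c i * 1 + d i)) < 1 := by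
      linarith
    rw [div_lt_one (mul_pos hP0 hP1)] at hd'
    nlinarith [hd']
  -- the uniform gain δ
  set δf : ℕ → ℝ := fun i => if c i = 0 then
      ((d i) ^ 2 - (a i * d i - b i * c i)) / (a i * d i - b i * c i)
    else min (d i) (c i + d i) * |c i| / (a i * d i - b i * c i) with hδfdef
  have hδfpos : ∀ i, i < N → 0 < δf i := by
    intro i hi
    simp only [hδfdef]
    split_ifs with hc
    · apply div_pos _ (hΔpos i hi)
      have h2 : d i * (c i + d i) = d i ^ 2 := by rw [hc]; ring
      linarith [hlen i hi]
    · exact div_pos (mul_pos (lt_min (hpos i hi).2 (hpos i hi).1) (abs_pos.2 hc)) (hΔpos i hi)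
  have hNe : (Finset.range N).Nonempty := ⟨0, Finset.mem_range.2 (by omega)⟩
  set δ : ℝ := (Finset.range N).inf' hNe δf with hδdef
  have hδpos : 0 < δ := by
    rw [hδdef, Finset.lt_inf'_iff]
    intro i hi
    exact hδfpos i (Finset.mem_range.1 hi)
  have hδle : ∀ i, i < N → δ ≤ δf i := by
    intro i hi
    exact Finset.inf'_le _ (Finset.mem_range.2 hi)
  -- the key inequality
  have hkey : ∀ i, i < N → ∀ x y : ℝ, 0 ≤ x → x ≤ y → y ≤ 1 →
      (a i * d i - b i * c i) * (1 + δ * (y - x)) ≤ (c i * x + d i) * (c i * y + d i) := by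
    intro i hi x y hx0 hxy hy1
    have hx1 : x ≤ 1 := hxy.trans hy1
    have hy0 : 0 ≤ y := hx0.trans hxy
    have hPx := hPge i hi x hx0 hx1
    have hPy := hPge i hi y hy0 hy1
    have hm : 0 < min (d i) (c i + d i) := lt_min (hpos i hi).2 (hpos i hi).1
    have hm2 : a i * d i - b i * c i ≤ (min (d i) (c i + d i)) ^ 2 := by
      rcases le_total (d i) (c i + d i) with h' | h'
      · rw [min_eq_left h']; exact hΔd i hi
      · rw [min_eq_right h']; exact hΔcd i hi
    have hΔ := hΔpos i hi
    have hδi := hδle i hi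
    by_cases hc : c i = 0
    · rw [hδfdef] at hδi
      simp only [if_pos hc] at hδi
      have hδΔ : δ * (a i * d i - b i * c i) ≤ (d i) ^ 2 - (a i * d i - b i * c i) :=
        (le_div_iff₀ hΔ).1 hδi
      have hyx1 : y - x ≤ 1 := by linarith
      have hPP : (c i * x + d i) * (c i * y + d i) = (d i) ^ 2 := by rw [hc]; ring
      rw [hPP]
      have t1 : δ * (a i * d i - b i * c i) * (y - x) ≤
          ((d i) ^ 2 - (a i * d i - b i * c i)) * (y - x) :=
        mul_le_mul_of_nonneg_right hδΔ (by linarith)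
      have t2 : ((d i) ^ 2 - (a i * d i - b i * c i)) * (y - x) ≤
          (d i) ^ 2 - (a i * d i - b i * c i) :=
        mul_le_of_le_one_right (by linarith [hΔd i hi]) hyx1
      nlinarith [t1, t2]
    · rw [hδfdef] at hδi
      simp only [if_neg hc] at hδi
      have hδΔ : δ * (a i * d i - b i * c i) ≤ min (d i) (c i + d i) * |c i| :=
        (le_div_iff₀ hΔ).1 hδi
      have hstep : δ * (a i * d i - b i * c i) * (y - x) ≤
          min (d i) (c i + d i) * |c i| * (y - x) :=
        mul_le_mul_of_nonneg_right hδΔ (sub_nonneg.2 hxy)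
      have hyx0 : (0:ℝ) ≤ y - x := by linarith
      rcases le_or_gt 0 (c i) with hcpos | hcneg
      · rw [abs_of_nonneg hcpos] at hstep
        have A1 : min (d i) (c i + d i) * min (d i) (c i + d i) ≤
            (c i * x + d i) * (c i * x + d i) :=
          mul_le_mul hPx hPx hm.le (le_trans hm.le hPx)
        have A2 : min (d i) (c i + d i) * c i * (y - x) ≤
            (c i * x + d i) * c i * (y - x) :=
          mul_le_mul_of_nonneg_right (mul_le_mul_of_nonneg_right hPx hcpos) hyx0
        linarith [A1, A2, hm2, hstep]
      · rw [abs_of_neg hcneg] at hstep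
        have A1 : min (d i) (c i + d i) * min (d i) (c i + d i) ≤
            (c i * y + d i) * (c i * y + d i) :=
          mul_le_mul hPy hPy hm.le (le_trans hm.le hPy)
        have A2 : min (d i) (c i + d i) * (-c i) * (y - x) ≤
            (c i * y + d i) * (-c i) * (y - x) :=
          mul_le_mul_of_nonneg_right
            (mul_le_mul_of_nonneg_right hPy (by linarith)) hyx0
        linarith [A1, A2, hm2, hstep]
  -- the main induction
  have main : ∀ σ : List ℕ, σ ≠ [] → (∀ i ∈ σ, i < N) →
      0 ≤ wordComp h σ 0 ∧ wordComp h σ 1 ≤ 1 ∧ 0 < wordComp h σ 1 - wordComp h σ 0 ∧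
      (wordComp h σ 1 - wordComp h σ 0) * (1 + ((σ.length : ℝ) - 1) * δ) ≤ 1 := by
    intro σ
    induction σ with
    | nil => intro hne _; exact absurd rfl hne
    | cons i τ ih =>
      intro _ hmem
      have hiN : i < N := hmem i (by simp)
      have hEi := hEbound i (le_of_lt hiN)
      have hEi1 := hEbound (i + 1) hiN
      by_cases hτ : τ = []
      · subst hτ
        have hw0 : wordComp h [i] 0 = h i 0 := rfl
        have hw1 : wordComp h [i] 1 = h i 1 := rfl
        rw [hw0, hw1, hEstep0 i hiN, hEstep1 i hiN]
        have hlt := hElt i hiN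
        refine ⟨hEi.1, hEi1.2, by linarith, ?_⟩
        have : ((List.length [i] : ℝ) - 1) = 0 := by norm_num
        rw [this, zero_mul]
        linarith
      · obtain ⟨ihx0, ihy1, ihyx, ihkey⟩ := ih hτ (fun j hj => hmem j (List.mem_cons_of_mem i hj))
        set x := wordComp h τ 0 with hxdef
        set y := wordComp h τ 1 with hydef
        have hxy : x ≤ y := by linarith
        have hx1 : x ≤ 1 := by linarith
        have hy0 : 0 ≤ y := by linarith
        have hw0 : wordComp h (i :: τ) 0 = h i x := rfl
        have hw1 : wordComp h (i :: τ) 1 = h i y := rfl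
        rw [hw0, hw1]
        have hmx := hmap i hiN x ihx0 hx1
        have hmy := hmap i hiN y hy0 ihy1
        have hd := hdiff i hiN x y ihx0 hx1 hy0 ihy1
        have hPx := hPpos i hiN x ihx0 hx1
        have hPy := hPpos i hiN y hy0 ihy1
        have hPP : 0 < (c i * x + d i) * (c i * y + d i) := mul_pos hPx hPy
        have hΔ := hΔpos i hiN
        have hLpos : 0 < h i y - h i x := by
          rw [hd]
          exact div_pos (mul_pos hΔ (by linarith)) hPP
        refine ⟨le_trans hEi.1 hmx.1, le_trans hmy.2 hEi1.2, hLpos, ?_⟩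
        have hKcast : ((List.length (i :: τ) : ℝ) - 1) = (τ.length : ℝ) := by
          rw [List.length_cons]
          push_cast
          ring
        rw [hKcast, hd, div_mul_eq_mul_div, div_le_one hPP]
        have h1 := hkey i hiN x y ihx0 hxy ihy1
        have h2 : (y - x) * (1 + (τ.length : ℝ) * δ) ≤ 1 + δ * (y - x) := by
          nlinarith [ihkey]
        nlinarith [mul_le_mul_of_nonneg_left h2 hΔ.le, h1]
  -- conclusion
  refine ⟨1 / δ + 1, by positivity, ?_⟩
  intro σ hne hmem
  obtain ⟨_, _, hLpos, hLkey⟩ := main σ hne hmem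
  have hn1 : 1 ≤ (σ.length : ℝ) := by
    have : 1 ≤ σ.length := List.length_pos_iff.2 hne
    exact_mod_cast this
  have hnpos : (0:ℝ) < (σ.length : ℝ) := by linarith
  rw [le_div_iff₀ hnpos]
  set L := wordComp h σ 1 - wordComp h σ 0 with hLdef
  have hL1 : L ≤ 1 := by nlinarith [mul_nonneg (mul_nonneg (by linarith : (0:ℝ) ≤ (σ.length:ℝ) - 1) hδpos.le) hLpos.le]
  have h3 : L * (σ.length : ℝ) * δ ≤ 1 + δ := by nlinarith [hLkey]
  have h4 : L * (σ.length : ℝ) ≤ (1 + δ) / δ := by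
    rw [le_div_iff₀ hδpos]
    linarith
  have h5 : (1 + δ) / δ = 1 / δ + 1 := by field_simp
  linarith
end

section
/- Let c, d be real numbers with d ≥ 1 and c + d ≥ 1. Then for all x, y ∈ [0,1], one has (c x + d)(c y + d) ≥ 1 + |c|·|x−y|. -/
/-- if `d ≥ 1` and `c + d ≥ 1`, then for all `x, y ∈ [0,1]`,
`(c x + d)(c y + d) ≥ 1 + |c| |x − y|`. -/
theorem stmt9 (c d : ℝ) (hd : 1 ≤ d) (hcd : 1 ≤ c + d)
    (x y : ℝ) (hx : x ∈ Set.Icc (0:ℝ) 1) (hy : y ∈ Set.Icc (0:ℝ) 1) :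
    1 + |c| * |x - y| ≤ (c * x + d) * (c * y + d) := by
  obtain ⟨hx0, hx1⟩ := hx
  obtain ⟨hy0, hy1⟩ := hy
  have h1 : 1 ≤ c * x + d := by
    rcases le_or_gt 0 c with h | h
    · nlinarith
    · nlinarith
  have h2 : 1 ≤ c * y + d := by
    rcases le_or_gt 0 c with h | h
    · nlinarith
    · nlinarith
  rcases abs_cases c with ⟨hc, hc'⟩ | ⟨hc, hc'⟩ <;> rcases abs_cases (x - y) with ⟨ha, ha'⟩ | ⟨ha, ha'⟩ <;>
    rw [hc, ha] <;> nlinarith [mul_nonneg (sub_nonneg.2 h1) (sub_nonneg.2 h2)]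
end

section
/- Assume that {f_i}_{i∈𝓘_N} and {g_i}_{i∈𝓘_N} are both LF systems on [0,1], and let φ be the unique continuous strictly increasing solution of g_i∘φ = φ∘f_i (i ∈ 𝓘_N). Then there exists a constant C > 0 such that for every y ∈ (0,1) and every r > 0 satisfying 0 ≤ y−r < y+r ≤ 1, one has μ_φ([y−r, y+r]) ≥ exp(−C/r). -/
open Set Filter Topology MeasureTheory

noncomputable def app (p q r s x : ℝ) : ℝ :=
  (p*x + q*(1-x)) / ((p+r)*x + (q+s)*(1-x))

lemma den_pos {p q r s x : ℝ} (hpr : 1 ≤ p + r) (hqs : 1 ≤ q + s)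
    (hx : x ∈ Icc (0:ℝ) 1) : 0 < (p+r)*x + (q+s)*(1-x) := by
  obtain ⟨h0, h1⟩ := hx; nlinarith

lemma app_mem {p q r s x : ℝ} (hp : 0 ≤ p) (hq : 0 ≤ q) (hr : 0 ≤ r) (hs : 0 ≤ s)
    (hpr : 1 ≤ p + r) (hqs : 1 ≤ q + s) (hx : x ∈ Icc (0:ℝ) 1) :
    app p q r s x ∈ Icc (0:ℝ) 1 := by
  obtain ⟨h0, h1⟩ := hx
  have hd := den_pos hpr hqs ⟨h0, h1⟩
  constructor
  · apply div_nonneg _ hd.le; nlinarith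
  · rw [app, div_le_one hd]; nlinarith

lemma app_sub {p q r s x y : ℝ}
    (hdx : (p+r)*x + (q+s)*(1-x) ≠ 0) (hdy : (p+r)*y + (q+s)*(1-y) ≠ 0) :
    app p q r s x - app p q r s y
      = (p*s - q*r)*(x - y) / (((p+r)*x + (q+s)*(1-x)) * ((p+r)*y + (q+s)*(1-y))) := by
  unfold app; rw [div_sub_div _ _ hdx hdy]; congr 1; ring

lemma app_id {x : ℝ} : app 1 0 0 1 x = x := by
  unfold app
  rw [show ((1:ℝ)+0)*x + (0+1)*(1-x) = 1 by ring, show (1:ℝ)*x + 0*(1-x) = x by ring,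
    div_one]

lemma app_comp {p q r s p' q' r' s' x : ℝ}
    (hd' : (p'+r')*x + (q'+s')*(1-x) ≠ 0) :
    app p q r s (app p' q' r' s' x)
      = app (p*p'+q*r') (p*q'+q*s') (r*p'+s*r') (r*q'+s*s') x := by
  have key : ((p+r)*(app p' q' r' s' x) + (q+s)*(1-app p' q' r' s' x))
      = (((p*p'+q*r')+(r*p'+s*r'))*x + ((p*q'+q*s')+(r*q'+s*s'))*(1-x))
        / ((p'+r')*x + (q'+s')*(1-x)) := by
    unfold app; rw [eq_div_iff hd', add_mul, mul_assoc, mul_assoc, mul_sub, sub_mul, div_mul_cancel₀ _ hd']; ring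
  have keyn : (p*(app p' q' r' s' x) + q*(1-app p' q' r' s' x))
      = ((p*p'+q*r')*x + (p*q'+q*s')*(1-x)) / ((p'+r')*x + (q'+s')*(1-x)) := by
    unfold app; rw [eq_div_iff hd', add_mul, mul_assoc, mul_assoc, mul_sub, sub_mul, div_mul_cancel₀ _ hd']; ring
  conv_lhs => rw [app, keyn, key]
  rw [div_div_div_cancel_right₀ hd']
  rfl

section LF
variable {N : ℕ} {a b c d : ℕ → ℝ} {h : ℕ → ℝ → ℝ}

lemma lf_lt (H : IsLFSystem N a b c d h) {i : ℕ} (hi : i < N) :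
    b i / d i < (a i + b i) / (c i + d i) := by
  have pos := H.2.1 i hi
  have det := (H.2.2.1 i hi).1
  rw [div_lt_div_iff₀ pos.2 pos.1]; nlinarith

lemma lf_left_nonneg (H : IsLFSystem N a b c d h) :
    ∀ i, i < N → 0 ≤ b i / d i := by
  intro i
  induction i with
  | zero => intro _; rw [H.2.2.2.1]; simp
  | succ n ih =>
    intro hn
    have hnN : n < N := Nat.lt_of_succ_lt hn
    rw [← H.2.2.2.2.1 n hn]
    exact le_of_lt (lt_of_le_of_lt (ih hnN) (lf_lt H hnN))

lemma lf_right_le_one (H : IsLFSystem N a b c d h) (hN : 1 ≤ N) :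
    ∀ i, i < N → (a i + b i) / (c i + d i) ≤ 1 := by
  have key : ∀ k, ∀ i, i < N → N - 1 - i = k → (a i + b i) / (c i + d i) ≤ 1 := by
    intro k
    induction k with
    | zero =>
      intro i hi hk
      have : i = N - 1 := by omega
      rw [this, H.2.2.2.2.2]
    | succ m ih =>
      intro i hi hk
      have h1 : i + 1 < N := by omega
      have h2 : N - 1 - (i+1) = m := by omega
      calc (a i + b i) / (c i + d i) = b (i+1) / d (i+1) := H.2.2.2.2.1 i h1
        _ ≤ (a (i+1) + b (i+1)) / (c (i+1) + d (i+1)) := (lf_lt H h1).le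
        _ ≤ 1 := ih (i+1) h1 h2
  intro i hi; exact key (N - 1 - i) i hi rfl

lemma lf_len_lt_one (H : IsLFSystem N a b c d h) (hN : 2 ≤ N) :
    ∀ i, i < N → (a i + b i) / (c i + d i) - b i / d i < 1 := by
  intro i hi
  have h0 := lf_left_nonneg H i hi
  have h1 := lf_right_le_one H (by omega) i hi
  by_cases hc : i + 1 < N
  · have : (a i + b i) / (c i + d i) < 1 := by
      rw [H.2.2.2.2.1 i hc]
      exact lt_of_lt_of_le (lf_lt H hc) (lf_right_le_one H (by omega) (i+1) hc)
    linarith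
  · have hiN : i = N - 1 := by omega
    have hj : (i - 1) + 1 = i := by omega
    have hj2 : (i-1) + 1 < N := by omega
    have : 0 < b i / d i := by
      have := H.2.2.2.2.1 (i-1) (by rw [hj]; exact hi)
      rw [hj] at this
      rw [← this]
      exact lt_of_le_of_lt (lf_left_nonneg H (i-1) (by omega)) (lf_lt H (by omega))
    linarith

lemma lf_det_lt (H : IsLFSystem N a b c d h) (hN : 2 ≤ N) {i : ℕ} (hi : i < N) :
    a i * d i - b i * c i < d i * (c i + d i) := by
  have pos := H.2.1 i hi
  have key := lf_len_lt_one H hN i hi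
  have hident : (a i + b i) / (c i + d i) - b i / d i
      = (a i * d i - b i * c i) / (d i * (c i + d i)) := by
    rw [div_sub_div _ _ (ne_of_gt pos.1) (ne_of_gt pos.2)]
    rw [show (a i + b i) * d i - (c i + d i) * b i = a i * d i - b i * c i by ring]
    rw [mul_comm (c i + d i) (d i)]
  rw [hident, div_lt_one (mul_pos pos.2 pos.1)] at key
  exact key

lemma lf_cover (H : IsLFSystem N a b c d h) (hN : 2 ≤ N) {z : ℝ} (hz : z ∈ Icc (0:ℝ) 1) :
    ∃ i, i < N ∧ b i / d i ≤ z ∧ z ≤ (a i + b i) / (c i + d i) := by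
  classical
  set S : Finset ℕ := (Finset.range N).filter (fun i => b i / d i ≤ z) with hS
  have h0S : 0 ∈ S := by
    simp only [hS, Finset.mem_filter, Finset.mem_range]
    exact ⟨by omega, by rw [H.2.2.2.1]; simpa using hz.1⟩
  have hne : S.Nonempty := ⟨0, h0S⟩
  set i := S.max' hne with hi
  have hiS : i ∈ S := S.max'_mem hne
  simp only [hS, Finset.mem_filter, Finset.mem_range] at hiS
  refine ⟨i, hiS.1, hiS.2, ?_⟩
  by_contra hlt
  push_neg at hlt
  by_cases hc : i + 1 < N
  · have : i + 1 ∈ S := by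
      simp only [hS, Finset.mem_filter, Finset.mem_range]
      exact ⟨hc, by rw [← H.2.2.2.2.1 i hc]; exact hlt.le⟩
    have := S.le_max' (i+1) this
    omega
  · have : i = N - 1 := by omega
    rw [this, H.2.2.2.2.2] at hlt
    exact absurd hz.2 (not_le.mpr hlt)

lemma lf_den_pos (H : IsLFSystem N a b c d h) {i : ℕ} (hi : i < N) {x : ℝ}
    (hx : x ∈ Icc (0:ℝ) 1) : 0 < c i * x + d i := by
  have pos := H.2.1 i hi
  obtain ⟨h0, h1⟩ := hx
  rcases le_or_gt 0 (c i) with hc | hc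
  · nlinarith [pos.2]
  · nlinarith [pos.1]

lemma lf_surj (H : IsLFSystem N a b c d h) {i : ℕ} (hi : i < N) {z : ℝ}
    (hz : z ∈ Icc (b i / d i) ((a i + b i) / (c i + d i))) :
    ∃ x ∈ Icc (0:ℝ) 1, h i x = z := by
  have hcont : ContinuousOn (h i) (Icc (0:ℝ) 1) := by
    apply ContinuousOn.congr (f := fun x => (a i * x + b i) / (c i * x + d i))
    · exact ContinuousOn.div (by fun_prop) (by fun_prop)
        (fun x hx => ne_of_gt (lf_den_pos H hi hx))
    · intro x hx; exact H.1 i hi x hx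
  have h0 : h i 0 = b i / d i := by
    rw [H.1 i hi 0 (by norm_num)]; norm_num
  have h1 : h i 1 = (a i + b i) / (c i + d i) := by
    rw [H.1 i hi 1 (by norm_num)]; norm_num
  have := intermediate_value_Icc (by norm_num : (0:ℝ) ≤ 1) hcont
  rw [h0, h1] at this
  obtain ⟨x, hx, hfx⟩ := this hz
  exact ⟨x, hx, hfx⟩
end LF

section LF2
variable {N : ℕ} {a b c d : ℕ → ℝ} {h : ℕ → ℝ → ℝ}

lemma lf_norm_facts (H : IsLFSystem N a b c d h) (hN : 2 ≤ N) {i : ℕ} (hi : i < N)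
    {e : ℝ} (hepos : 0 < e) (he : e^2 = a i * d i - b i * c i) :
    0 ≤ (a i + b i)/e ∧ 0 ≤ b i/e ∧ 0 ≤ (c i + d i - (a i + b i))/e ∧ 0 ≤ (d i - b i)/e ∧
    ((a i + b i)/e) * ((d i - b i)/e) - (b i/e) * ((c i + d i - (a i + b i))/e) = 1 ∧
    (a i + b i)/e + (c i + d i - (a i + b i))/e = (c i + d i)/e ∧
    (b i)/e + (d i - b i)/e = (d i)/e ∧
    1 ≤ (c i + d i)/e ∧ 1 ≤ (d i)/e := by
  have pos := H.2.1 i hi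
  have det := H.2.2.1 i hi
  have hl := lf_left_nonneg H i hi
  have hr1 := lf_right_le_one H (by omega) i hi
  have hlt := lf_lt H hi
  have hb : 0 ≤ b i := by
    have := mul_nonneg hl pos.2.le
    rwa [div_mul_cancel₀ _ (ne_of_gt pos.2)] at this
  have hbd : b i ≤ d i := by
    have : b i / d i ≤ 1 := le_of_lt (lt_of_lt_of_le hlt hr1)
    rwa [div_le_one pos.2] at this
  have hab : 0 ≤ a i + b i := by
    have h2 : 0 ≤ (a i + b i)/(c i + d i) := le_of_lt (lt_of_le_of_lt hl hlt)
    have := mul_nonneg h2 pos.1.le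
    rwa [div_mul_cancel₀ _ (ne_of_gt pos.1)] at this
  have habcd : a i + b i ≤ c i + d i := by
    rwa [div_le_one pos.1] at hr1
  have hed : e ≤ d i := by
    have h2 := le_trans det.2 (min_le_left _ _)
    nlinarith [pos.2]
  have hecd : e ≤ c i + d i := by
    have h2 := le_trans det.2 (min_le_right _ _)
    nlinarith [pos.1]
  refine ⟨div_nonneg hab hepos.le, div_nonneg hb hepos.le,
    div_nonneg (by linarith) hepos.le, div_nonneg (by linarith) hepos.le, ?_, ?_, ?_, ?_, ?_⟩
  · have key : ((a i + b i)/e) * ((d i - b i)/e) - (b i/e) * ((c i + d i - (a i + b i))/e)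
        = (a i * d i - b i * c i)/e^2 := by
      field_simp; ring
    rw [key, ← he, div_self (by positivity)]
  · rw [← add_div, show a i + b i + (c i + d i - (a i + b i)) = c i + d i by ring]
  · rw [← add_div, show b i + (d i - b i) = d i by ring]
  · rw [le_div_iff₀ hepos]; linarith
  · rw [le_div_iff₀ hepos]; linarith

lemma lf_app_eq (H : IsLFSystem N a b c d h) {i : ℕ} (hi : i < N)
    {e : ℝ} (hepos : 0 < e) (he : e^2 = a i * d i - b i * c i) {x : ℝ}
    (hx : x ∈ Icc (0:ℝ) 1) :
    app ((a i + b i)/e) (b i/e) ((c i + d i - (a i + b i))/e) ((d i - b i)/e) x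
      = h i x := by
  rw [H.1 i hi x hx]
  have hden := lf_den_pos H hi hx
  have he' : e ≠ 0 := ne_of_gt hepos
  unfold app
  have h1 : (a i + b i)/e*x + b i/e*(1-x) = (a i*x + b i)/e := by field_simp; ring
  have h2 : ((a i + b i)/e + (c i + d i - (a i + b i))/e)*x + (b i/e + (d i - b i)/e)*(1-x)
      = (c i*x + d i)/e := by field_simp; ring
  rw [h1, h2, div_div_div_cancel_right₀ he']
end LF2


set_option maxHeartbeats 1000000 in
/-- weak regularity: if `{f i}` and `{g i}` are LF systems and `φ` is
the continuous strictly increasing solution of `g i ∘ φ = φ ∘ f i`, with `μ` the Borel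
probability measure on `[0,1]` whose CDF is `φ`, then there is `C > 0` such that
`μ([y−r, y+r]) ≥ exp(−C/r)` whenever `0 ≤ y−r < y+r ≤ 1` with `y ∈ (0,1)`, `r > 0`. -/
theorem stmt10 (N : ℕ) (hN : 2 ≤ N)
    (af bf cf df ag bg cg dg : ℕ → ℝ) (f g : ℕ → ℝ → ℝ)
    (hf : IsLFSystem N af bf cf df f) (hg : IsLFSystem N ag bg cg dg g)
    (φ : ℝ → ℝ)
    (hmaps : Set.MapsTo φ (Set.Icc (0:ℝ) 1) (Set.Icc (0:ℝ) 1))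
    (hcont : ContinuousOn φ (Set.Icc (0:ℝ) 1))
    (hmono : StrictMonoOn φ (Set.Icc (0:ℝ) 1))
    (heq : ∀ i < N, ∀ x ∈ Set.Icc (0:ℝ) 1, g i (φ x) = φ (f i x))
    (μ : Measure ℝ) [IsProbabilityMeasure μ]
    (hsupp : μ (Set.Icc (0:ℝ) 1) = 1)
    (hcdf : ∀ x ∈ Set.Icc (0:ℝ) 1, μ (Set.Iic x) = ENNReal.ofReal (φ x)) :
    ∃ C : ℝ, 0 < C ∧ ∀ y r : ℝ, 0 < y → y < 1 → 0 < r → 0 ≤ y - r → y + r ≤ 1 →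
      ENNReal.ofReal (Real.exp (-C / r)) ≤ μ (Set.Icc (y - r) (y + r)) := by
  have h01 : (0:ℝ) ∈ Icc (0:ℝ) 1 := by norm_num
  have h11 : (1:ℝ) ∈ Icc (0:ℝ) 1 := by norm_num
  have hφ1 : φ 1 = 1 := by
    have hA := hcdf 1 h11
    have hB : (1:ENNReal) ≤ μ (Set.Iic 1) := by
      rw [← hsupp]; exact measure_mono (fun x hx => hx.2)
    rw [hA] at hB
    have hC : (1:ℝ) ≤ φ 1 := ENNReal.one_le_ofReal.mp hB
    have hD := (hmaps h11).2
    linarith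
  set t0 := φ 0 with ht0
  have ht0mem : t0 ∈ Icc (0:ℝ) 1 := hmaps h01
  have ht0lt : t0 < 1 := by
    have := hmono h01 h11 one_pos
    rwa [hφ1] at this
  have h1t : (0:ℝ) < 1 - t0 := by linarith
  clear_value t0
  have hne : (Finset.range N).Nonempty := ⟨0, Finset.mem_range.mpr (by omega)⟩
  -- δ : minimal expansion gain of the f-system
  set δ := ((Finset.range N).inf' hne
      (fun i => (cf i + df i) * df i / (af i * df i - bf i * cf i))) - 1 with hδdef
  have hδpos : 0 < δ := by
    have hkey : 1 < (Finset.range N).inf' hne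
        (fun i => (cf i + df i) * df i / (af i * df i - bf i * cf i)) := by
      rw [Finset.lt_inf'_iff]
      intro i hi
      rw [Finset.mem_range] at hi
      have det := (hf.2.2.1 i hi).1
      rw [one_lt_div det]
      linarith [lf_det_lt hf hN hi, mul_comm (cf i + df i) (df i)]
    rw [hδdef]; linarith
  have hδle : ∀ i, i < N →
      1 + δ ≤ (cf i + df i) * df i / (af i * df i - bf i * cf i) := by
    intro i hi
    have := Finset.inf'_le
      (fun i => (cf i + df i) * df i / (af i * df i - bf i * cf i))
      (Finset.mem_range.mpr hi)
    rw [hδdef]; linarith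
  clear_value δ
  -- K : maximal normalized column sum of the g-system
  set K := (Finset.range N).sup' hne
      (fun i => max ((cg i + dg i) / Real.sqrt (ag i * dg i - bg i * cg i))
                    (dg i / Real.sqrt (ag i * dg i - bg i * cg i))) with hKdef
  have hKle : ∀ i, i < N →
      (cg i + dg i) / Real.sqrt (ag i * dg i - bg i * cg i) ≤ K ∧
      dg i / Real.sqrt (ag i * dg i - bg i * cg i) ≤ K := by
    intro i hi
    have h := Finset.le_sup' (f := fun i =>
        max ((cg i + dg i) / Real.sqrt (ag i * dg i - bg i * cg i))
            (dg i / Real.sqrt (ag i * dg i - bg i * cg i))) (Finset.mem_range.mpr hi)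
    exact ⟨le_trans (le_max_left _ _) h, le_trans (le_max_right _ _) h⟩
  have hK1 : 1 ≤ K := by
    have h0N : 0 < N := by omega
    have det := (hg.2.2.1 0 h0N).1
    have hepos : 0 < Real.sqrt (ag 0 * dg 0 - bg 0 * cg 0) := Real.sqrt_pos.mpr det
    have hesq := Real.sq_sqrt det.le
    obtain ⟨_,_,_,_,_,_,_,_,hd1⟩ := lf_norm_facts hg hN h0N hepos hesq
    exact le_trans hd1 (hKle 0 h0N).2
  have hKpos : 0 < K := lt_of_lt_of_le one_pos hK1
  clear_value K
  -- the main induction: nested tiles around any point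
  have main : ∀ n : ℕ, ∀ y ∈ Icc (0:ℝ) 1, ∃ p q r s P Q R S z : ℝ,
      0 ≤ p ∧ 0 ≤ q ∧ 0 ≤ r ∧ 0 ≤ s ∧ p * s - q * r = 1 ∧
      1 ≤ p + r ∧ 1 ≤ q + s ∧ 1 + (n:ℝ) * δ ≤ (p + r) * (q + s) ∧
      0 ≤ P ∧ 0 ≤ Q ∧ 0 ≤ R ∧ 0 ≤ S ∧ P * S - Q * R = 1 ∧
      1 ≤ P + R ∧ 1 ≤ Q + S ∧ P + R ≤ K ^ n ∧ Q + S ≤ K ^ n ∧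
      z ∈ Icc (0:ℝ) 1 ∧ app p q r s z = y ∧
      (∀ x ∈ Icc (0:ℝ) 1, φ (app p q r s x) = app P Q R S (φ x)) := by
    intro n
    induction n with
    | zero =>
      intro y hy
      refine ⟨1,0,0,1,1,0,0,1,y, by norm_num, by norm_num, by norm_num, by norm_num,
        by norm_num, by norm_num, by norm_num, by norm_num, by norm_num, by norm_num,
        by norm_num, by norm_num, by norm_num, by norm_num, by norm_num, by norm_num,
        by norm_num, hy, app_id, ?_⟩
      intro x _; rw [app_id, app_id]
    | succ n ih =>
      intro y hy
      obtain ⟨p,q,r,s,P,Q,R,S,z,hp,hq,hr0,hs,hdet,hpr,hqs,hprod,hP,hQ,hR,hS,hDet,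
        hPR,hQS,hPRK,hQSK,hz,happz,hconj⟩ := ih y hy
      obtain ⟨i, hiN, hz1, hz2⟩ := lf_cover hf hN hz
      obtain ⟨z', hz', hfz'⟩ := lf_surj hf hiN ⟨hz1, hz2⟩
      -- normalized tuple for f i
      have detf := (hf.2.2.1 i hiN).1
      have hef : 0 < Real.sqrt (af i * df i - bf i * cf i) := Real.sqrt_pos.mpr detf
      have hefsq : (Real.sqrt (af i * df i - bf i * cf i))^2 = af i * df i - bf i * cf i :=
        Real.sq_sqrt detf.le
      set e1 := Real.sqrt (af i * df i - bf i * cf i) with he1def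
      set pf := (af i + bf i)/e1 with hpfdef
      set qf := bf i/e1 with hqfdef
      set rf := (cf i + df i - (af i + bf i))/e1 with hrfdef
      set sf := (df i - bf i)/e1 with hsfdef
      obtain ⟨hpf, hqf, hrf, hsf, hdetf, hcol1f, hcol2f, hcdf1, hdf1⟩ :=
        lf_norm_facts hf hN hiN hef hefsq
      -- normalized tuple for g i
      have detg := (hg.2.2.1 i hiN).1
      have heg : 0 < Real.sqrt (ag i * dg i - bg i * cg i) := Real.sqrt_pos.mpr detg
      have hegsq : (Real.sqrt (ag i * dg i - bg i * cg i))^2 = ag i * dg i - bg i * cg i :=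
        Real.sq_sqrt detg.le
      set e2 := Real.sqrt (ag i * dg i - bg i * cg i) with he2def
      set pg := (ag i + bg i)/e2 with hpgdef
      set qg := bg i/e2 with hqgdef
      set rg := (cg i + dg i - (ag i + bg i))/e2 with hrgdef
      set sg := (dg i - bg i)/e2 with hsgdef
      obtain ⟨hpg, hqg, hrg, hsg, hdetg, hcol1g, hcol2g, hcdg1, hdg1⟩ :=
        lf_norm_facts hg hN hiN heg hegsq
      have hfc1 : 1 ≤ pf + rf := by rw [hcol1f]; exact hcdf1
      have hfc2 : 1 ≤ qf + sf := by rw [hcol2f]; exact hdf1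
      have hgc1 : 1 ≤ pg + rg := by rw [hcol1g]; exact hcdg1
      have hgc2 : 1 ≤ qg + sg := by rw [hcol2g]; exact hdg1
      have hgK1 : pg + rg ≤ K := by rw [hcol1g]; exact (hKle i hiN).1
      have hgK2 : qg + sg ≤ K := by rw [hcol2g]; exact (hKle i hiN).2
      have hcp : 1 + δ ≤ (pf + rf) * (qf + sf) := by
        rw [hcol1f, hcol2f, div_mul_div_comm, ← sq, hefsq]
        exact hδle i hiN
      have happf : ∀ x ∈ Icc (0:ℝ) 1, app pf qf rf sf x = f i x := by
        intro x hx
        rw [hpfdef, hqfdef, hrfdef, hsfdef]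
        exact lf_app_eq hf hiN hef hefsq hx
      have happg : ∀ u ∈ Icc (0:ℝ) 1, app pg qg rg sg u = g i u := by
        intro u hu
        rw [hpgdef, hqgdef, hrgdef, hsgdef]
        exact lf_app_eq hg hiN heg hegsq hu
      refine ⟨p*pf+q*rf, p*qf+q*sf, r*pf+s*rf, r*qf+s*sf,
        P*pg+Q*rg, P*qg+Q*sg, R*pg+S*rg, R*qg+S*sg, z',
        add_nonneg (mul_nonneg hp hpf) (mul_nonneg hq hrf),
        add_nonneg (mul_nonneg hp hqf) (mul_nonneg hq hsf),
        add_nonneg (mul_nonneg hr0 hpf) (mul_nonneg hs hrf),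
        add_nonneg (mul_nonneg hr0 hqf) (mul_nonneg hs hsf),
        ?_, ?_, ?_, ?_,
        add_nonneg (mul_nonneg hP hpg) (mul_nonneg hQ hrg),
        add_nonneg (mul_nonneg hP hqg) (mul_nonneg hQ hsg),
        add_nonneg (mul_nonneg hR hpg) (mul_nonneg hS hrg),
        add_nonneg (mul_nonneg hR hqg) (mul_nonneg hS hsg),
        ?_, ?_, ?_, ?_, ?_, hz', ?_, ?_⟩
      · -- determinant f
        have : (p*pf+q*rf)*(r*qf+s*sf) - (p*qf+q*sf)*(r*pf+s*rf)
            = (p*s - q*r)*(pf*sf - qf*rf) := by ring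
        rw [this, hdet, hdetf]; norm_num
      · -- 1 ≤ new p + r
        linarith [mul_nonneg (by linarith : (0:ℝ) ≤ p + r - 1) hpf,
          mul_nonneg (by linarith : (0:ℝ) ≤ q + s - 1) hrf, hfc1]
      · -- 1 ≤ new q + s
        linarith [mul_nonneg (by linarith : (0:ℝ) ≤ p + r - 1) hqf,
          mul_nonneg (by linarith : (0:ℝ) ≤ q + s - 1) hsf, hfc2]
      · -- column-sum product gain
        have key : ((p*pf+q*rf)+(r*pf+s*rf)) * ((p*qf+q*sf)+(r*qf+s*sf))
            = (p+r)*(q+s) + ((pf+rf)*(qf+sf) - 1)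
              + (pf*qf*((p+r)*(p+r)-1) + rf*sf*((q+s)*(q+s)-1)
                + 2*(qf*rf)*((p+r)*(q+s)-1))
              + ((p+r)*(q+s) - 1)*((pf*sf - qf*rf) - 1) := by ring
        have hx1 : (1:ℝ)*1 ≤ (p+r)*(p+r) :=
          mul_le_mul hpr hpr zero_le_one (by linarith)
        have hx2 : (1:ℝ)*1 ≤ (q+s)*(q+s) :=
          mul_le_mul hqs hqs zero_le_one (by linarith)
        have hx3 : (1:ℝ)*1 ≤ (p+r)*(q+s) :=
          mul_le_mul hpr hqs zero_le_one (by linarith)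
        have h8a : 0 ≤ pf*qf*((p+r)*(p+r)-1) :=
          mul_nonneg (mul_nonneg hpf hqf) (by linarith)
        have h8b : 0 ≤ rf*sf*((q+s)*(q+s)-1) :=
          mul_nonneg (mul_nonneg hrf hsf) (by linarith)
        have h8c : 0 ≤ 2*(qf*rf)*((p+r)*(q+s)-1) := by
          apply mul_nonneg (by positivity); linarith
        rw [key, hdetf]
        have hz0 : ((p+r)*(q+s) - 1)*((1:ℝ)-1) = 0 := by ring
        push_cast
        linarith [hprod, hcp, h8a, h8b, h8c, hz0]
      · -- determinant g
        have : (P*pg+Q*rg)*(R*qg+S*sg) - (P*qg+Q*sg)*(R*pg+S*rg)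
            = (P*S - Q*R)*(pg*sg - qg*rg) := by ring
        rw [this, hDet, hdetg]; norm_num
      · linarith [mul_nonneg (by linarith : (0:ℝ) ≤ P + R - 1) hpg,
          mul_nonneg (by linarith : (0:ℝ) ≤ Q + S - 1) hrg, hgc1]
      · linarith [mul_nonneg (by linarith : (0:ℝ) ≤ P + R - 1) hqg,
          mul_nonneg (by linarith : (0:ℝ) ≤ Q + S - 1) hsg, hgc2]
      · -- new P + R ≤ K^(n+1)
        have b1 : (P+R)*pg ≤ K^n*pg := mul_le_mul_of_nonneg_right hPRK hpg
        have b2 : (Q+S)*rg ≤ K^n*rg := mul_le_mul_of_nonneg_right hQSK hrg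
        have b3 : K^n*(pg+rg) ≤ K^n*K :=
          mul_le_mul_of_nonneg_left hgK1 (by positivity)
        calc (P*pg+Q*rg)+(R*pg+S*rg) = (P+R)*pg + (Q+S)*rg := by ring
          _ ≤ K^n*pg + K^n*rg := by linarith
          _ = K^n*(pg+rg) := by ring
          _ ≤ K^n*K := b3
          _ = K^(n+1) := (pow_succ K n).symm
      · have b1 : (P+R)*qg ≤ K^n*qg := mul_le_mul_of_nonneg_right hPRK hqg
        have b2 : (Q+S)*sg ≤ K^n*sg := mul_le_mul_of_nonneg_right hQSK hsg
        have b3 : K^n*(qg+sg) ≤ K^n*K :=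
          mul_le_mul_of_nonneg_left hgK2 (by positivity)
        calc (P*qg+Q*sg)+(R*qg+S*sg) = (P+R)*qg + (Q+S)*sg := by ring
          _ ≤ K^n*qg + K^n*sg := by linarith
          _ = K^n*(qg+sg) := by ring
          _ ≤ K^n*K := b3
          _ = K^(n+1) := (pow_succ K n).symm
      · -- evaluation at z'
        have hdf' : (pf+rf)*z' + (qf+sf)*(1-z') ≠ 0 :=
          ne_of_gt (den_pos hfc1 hfc2 hz')
        rw [← app_comp hdf', happf z' hz', hfz', happz]
      · -- conjugacy invariant
        intro x hx
        have hdf'x : (pf+rf)*x + (qf+sf)*(1-x) ≠ 0 :=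
          ne_of_gt (den_pos hfc1 hfc2 hx)
        have hφx : φ x ∈ Icc (0:ℝ) 1 := hmaps hx
        have hdg'x : (pg+rg)*(φ x) + (qg+sg)*(1-φ x) ≠ 0 :=
          ne_of_gt (den_pos hgc1 hgc2 hφx)
        have hfx : f i x ∈ Icc (0:ℝ) 1 := by
          have := app_mem hpf hqf hrf hsf hfc1 hfc2 hx
          rwa [happf x hx] at this
        calc φ (app (p*pf+q*rf) (p*qf+q*sf) (r*pf+s*rf) (r*qf+s*sf) x)
            = φ (app p q r s (app pf qf rf sf x)) := by rw [app_comp hdf'x]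
          _ = φ (app p q r s (f i x)) := by rw [happf x hx]
          _ = app P Q R S (φ (f i x)) := hconj (f i x) hfx
          _ = app P Q R S (g i (φ x)) := by rw [← heq i hiN x hx]
          _ = app P Q R S (app pg qg rg sg (φ x)) := by rw [happg (φ x) hφx]
          _ = app (P*pg+Q*rg) (P*qg+Q*sg) (R*pg+S*rg) (R*qg+S*sg) (φ x) :=
            app_comp hdg'x
  -- choose the constant
  set L := Real.log K with hLdef
  have hLnonneg : 0 ≤ L := Real.log_nonneg hK1
  clear_value L
  set B := -Real.log (1 - t0) with hBdef
  have hBnonneg : 0 ≤ B := by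
    rw [hBdef]
    have := Real.log_nonpos (by linarith) (by linarith [ht0mem.1] : 1 - t0 ≤ 1)
    linarith
  clear_value B
  refine ⟨2*L*(1/δ) + L + B + 1, by positivity, ?_⟩
  intro y r hy0 hy1 hrpos hyr1 hyr2
  set C := 2*L*(1/δ) + L + B + 1 with hCdef
  clear_value C
  have hrhalf : r ≤ 1/2 := by linarith
  set n := Nat.ceil (1/(r*δ)) with hndef
  obtain ⟨pp,qq,rr,ss,PP,QQ,RR,SS,zz,hp,hq,hr0,hs,hdet,hpr,hqs,hprod,hP,hQ,hR,hS,hDet,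
    hPR,hQS,hPRK,hQSK,hz,happz,hconj⟩ := main n y ⟨hy0.le, hy1.le⟩
  have h1c : (1:ℝ)/(r*δ) ≤ n := Nat.le_ceil _
  have h2c : (n:ℝ) ≤ 1/(r*δ) + 1 :=
    le_of_lt (Nat.ceil_lt_add_one (le_of_lt (div_pos one_pos (mul_pos hrpos hδpos))))
  clear_value n
  have hinv : 1/r ≤ (n:ℝ)*δ := by
    have e : (1/(r*δ))*δ = 1/r := by field_simp
    linarith [mul_le_mul_of_nonneg_right h1c hδpos.le, e]
  have hrinvpos : (0:ℝ) < 1/r := by positivity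
  have hnd_pos : (0:ℝ) < 1 + (n:ℝ)*δ := by linarith
  have hlen_r : 1/(1 + (n:ℝ)*δ) ≤ r := by
    rw [div_le_iff₀ hnd_pos]
    have hx : r * (1/r) = 1 := by field_simp
    linarith [mul_le_mul_of_nonneg_left hinv hrpos.le, hx, hrpos.le]
  set α := app pp qq rr ss 0 with hαdef
  set β := app pp qq rr ss 1 with hβdef
  have hd0 : (pp+rr)*(0:ℝ) + (qq+ss)*(1-0) ≠ 0 := ne_of_gt (den_pos hpr hqs h01)
  have hd1 : (pp+rr)*(1:ℝ) + (qq+ss)*(1-1) ≠ 0 := ne_of_gt (den_pos hpr hqs h11)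
  have hdz : (pp+rr)*zz + (qq+ss)*(1-zz) ≠ 0 := ne_of_gt (den_pos hpr hqs hz)
  have hαmem : α ∈ Icc (0:ℝ) 1 := app_mem hp hq hr0 hs hpr hqs h01
  have hβmem : β ∈ Icc (0:ℝ) 1 := app_mem hp hq hr0 hs hpr hqs h11
  have hαy : α ≤ y := by
    have hsub := app_sub hdz hd0
    rw [happz, hdet] at hsub
    have hposd : 0 ≤ 1*(zz - 0)/(((pp+rr)*zz + (qq+ss)*(1-zz))*((pp+rr)*0 + (qq+ss)*(1-0))) :=
      div_nonneg (by linarith [hz.1])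
        (mul_nonneg (le_of_lt (den_pos hpr hqs hz)) (le_of_lt (den_pos hpr hqs h01)))
    rw [← hαdef] at hsub
    linarith
  have hyβ : y ≤ β := by
    have hsub := app_sub hd1 hdz
    rw [happz, hdet] at hsub
    have hposd : 0 ≤ 1*(1 - zz)/(((pp+rr)*1 + (qq+ss)*(1-1))*((pp+rr)*zz + (qq+ss)*(1-zz))) :=
      div_nonneg (by linarith [hz.2])
        (mul_nonneg (le_of_lt (den_pos hpr hqs h11)) (le_of_lt (den_pos hpr hqs hz)))
    rw [← hβdef] at hsub
    linarith
  have hprodpos : (0:ℝ) < (pp+rr)*(qq+ss) := by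
    have := mul_le_mul hpr hqs zero_le_one (by linarith : (0:ℝ) ≤ pp+rr)
    linarith
  have hβα : β - α = 1/((pp+rr)*(qq+ss)) := by
    have hsub := app_sub hd1 hd0
    rw [hdet, ← hαdef, ← hβdef] at hsub
    rw [hsub, show (1:ℝ)*(1-0) = 1 by norm_num,
      show ((pp+rr)*1 + (qq+ss)*(1-1))*((pp+rr)*0+(qq+ss)*(1-0)) = (pp+rr)*(qq+ss) by ring]
  have hβαr : β - α ≤ r := by
    rw [hβα]
    calc 1/((pp+rr)*(qq+ss)) ≤ 1/(1+(n:ℝ)*δ) :=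
          one_div_le_one_div_of_le hnd_pos hprod
      _ ≤ r := hlen_r
  clear_value α β
  have hαβ : α ≤ β := by
    rw [hβα] at *
    linarith [le_of_lt (div_pos one_pos hprodpos)]
  -- φ gap
  have hφβ : φ β = app PP QQ RR SS 1 := by
    rw [hβdef, hconj 1 h11, hφ1]
  have hφα : φ α = app PP QQ RR SS t0 := by
    rw [hαdef, hconj 0 h01, ht0]
  have hD1pos : 0 < (PP+RR)*(1:ℝ) + (QQ+SS)*(1-1) := den_pos hPR hQS h11
  have hDtpos : 0 < (PP+RR)*t0 + (QQ+SS)*(1-t0) := den_pos hPR hQS ht0mem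
  have hKn : (0:ℝ) < K^n := by positivity
  have hD1le : (PP+RR)*(1:ℝ) + (QQ+SS)*(1-1) ≤ K^n := by
    have e : (PP+RR)*(1:ℝ) + (QQ+SS)*(1-1) = PP+RR := by ring
    rw [e]; exact hPRK
  have hDtle : (PP+RR)*t0 + (QQ+SS)*(1-t0) ≤ K^n := by
    have b1 : (PP+RR)*t0 ≤ K^n*t0 := mul_le_mul_of_nonneg_right hPRK ht0mem.1
    have b2 : (QQ+SS)*(1-t0) ≤ K^n*(1-t0) :=
      mul_le_mul_of_nonneg_right hQSK (by linarith [ht0mem.2])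
    linarith [b1, b2]
  have hgap_ge : (1-t0)/(K^n*K^n) ≤ φ β - φ α := by
    have hgap := app_sub (p := PP) (q := QQ) (r := RR) (s := SS)
      (ne_of_gt hD1pos) (ne_of_gt hDtpos)
    rw [hDet] at hgap
    rw [hφβ, hφα, hgap]
    have hDD : ((PP+RR)*(1:ℝ) + (QQ+SS)*(1-1))*((PP+RR)*t0 + (QQ+SS)*(1-t0))
        ≤ K^n*K^n := mul_le_mul hD1le hDtle hDtpos.le hKn.le
    rw [div_le_div_iff₀ (by positivity) (mul_pos hD1pos hDtpos)]
    linarith [mul_le_mul_of_nonneg_left hDD h1t.le]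
  have hKnL : K^n = Real.exp ((n:ℝ)*L) := by
    rw [hLdef, Real.exp_nat_mul, Real.exp_log hKpos]
  have hKK : K^n*K^n = Real.exp (2*(n:ℝ)*L) := by
    rw [hKnL, ← Real.exp_add]; congr 1; ring
  have hCr : 2*(n:ℝ)*L + B ≤ C/r := by
    rw [le_div_iff₀ hrpos]
    have hnr : (n:ℝ)*r ≤ 1/δ + r := by
      have e1 : (1/(r*δ) + 1)*r = 1/δ + r := by field_simp
      calc (n:ℝ)*r ≤ (1/(r*δ)+1)*r := mul_le_mul_of_nonneg_right h2c hrpos.le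
        _ = 1/δ + r := e1
    have t1 : 2*L*((n:ℝ)*r) ≤ 2*L*(1/δ + r) :=
      mul_le_mul_of_nonneg_left hnr (by linarith)
    have t2 : B*r ≤ B*(1/2) := mul_le_mul_of_nonneg_left hrhalf hBnonneg
    have t3 : 2*L*r ≤ 2*L*(1/2) := mul_le_mul_of_nonneg_left hrhalf (by linarith)
    rw [hCdef]
    linarith [t1, t2, t3, hLnonneg, hBnonneg]
  have hexp : Real.exp (-C/r) ≤ φ β - φ α := by
    have e2 : (1-t0)/(K^n*K^n) = Real.exp (Real.log (1-t0) - 2*(n:ℝ)*L) := by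
      rw [Real.exp_sub, Real.exp_log h1t, hKK]
    have e3 : Real.exp (-C/r) ≤ Real.exp (Real.log (1-t0) - 2*(n:ℝ)*L) := by
      apply Real.exp_le_exp.mpr
      have hlogB : Real.log (1-t0) = -B := by rw [hBdef]; ring
      rw [hlogB, neg_div]
      linarith [hCr]
    calc Real.exp (-C/r) ≤ Real.exp (Real.log (1-t0) - 2*(n:ℝ)*L) := e3
      _ = (1-t0)/(K^n*K^n) := e2.symm
      _ ≤ φ β - φ α := hgap_ge
  have hφαnn : 0 ≤ φ α := (hmaps hαmem).1
  calc ENNReal.ofReal (Real.exp (-C/r))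
      ≤ ENNReal.ofReal (φ β - φ α) := ENNReal.ofReal_le_ofReal hexp
    _ = μ (Set.Iic β) - μ (Set.Iic α) := by
        rw [hcdf β hβmem, hcdf α hαmem]
        exact ENNReal.ofReal_sub _ hφαnn
    _ = μ (Set.Ioc α β) := by
        rw [← Set.Iic_sdiff_Iic, measure_diff (Set.Iic_subset_Iic.mpr hαβ)
          measurableSet_Iic.nullMeasurableSet (measure_ne_top μ _)]
    _ ≤ μ (Set.Icc (y - r) (y + r)) := by
        apply measure_mono
        intro u hu
        exact ⟨by linarith [hu.1, hyβ, hβαr], by linarith [hu.2, hαy, hβαr]⟩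
end
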